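/- arXiv:1307.7025 — 5 statements merged into one kernel-verified Lean document; each statement's English description precedes it below -/
import Mathlib

section
/- Local complementation along an edge is symmetric in the two endpoints: for every finite simple graph G = (V,E) and every edge {v,w} ∈ E with v ≠ w, one has ((G⋆v)⋆w)⋆v = ((G⋆w)⋆v)⋆w. -/
open scoped Matrix BigOperators
open scoped Classical

noncomputable section

/-- The state space of `n` qubits: amplitudes indexed by bit strings. -/
abbrev QState (n : ℕ) := (Fin n → Fin 2) → ℂ

/-- Operators on `n` qubits, as matrices indexed by bit strings. -/
abbrev QOp (n : ℕ) := Matrix (Fin n → Fin 2) (Fin n → Fin 2) ℂ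

def PauliX : Matrix (Fin 2) (Fin 2) ℂ := !![0, 1; 1, 0]
def PauliY : Matrix (Fin 2) (Fin 2) ℂ := !![0, -Complex.I; Complex.I, 0]
def PauliZ : Matrix (Fin 2) (Fin 2) ℂ := !![1, 0; 0, -1]

/-- The Hadamard matrix. -/
def Hmat : Matrix (Fin 2) (Fin 2) ℂ := ((1 / Real.sqrt 2 : ℝ) : ℂ) • !![1, 1; 1, -1]

/-- `Z_θ = diag(1, e^{iθ})`. -/
def Zrot (θ : ℝ) : Matrix (Fin 2) (Fin 2) ℂ := !![1, 0; 0, Complex.exp (θ * Complex.I)]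

/-- `X_θ = H · Z_θ · H`. -/
def Xrot (θ : ℝ) : Matrix (Fin 2) (Fin 2) ℂ := Hmat * Zrot θ * Hmat

/-- The single-qubit Pauli group: matrices `i^k · g` with `g ∈ {I,X,Y,Z}`. -/
def Pauli1 : Set (Matrix (Fin 2) (Fin 2) ℂ) :=
  {M | ∃ (k : Fin 4) (g : Matrix (Fin 2) (Fin 2) ℂ),
    g ∈ ({1, PauliX, PauliY, PauliZ} : Set (Matrix (Fin 2) (Fin 2) ℂ)) ∧
    M = Complex.I ^ (k : ℕ) • g}

/-- A single-qubit Clifford unitary: a unitary normalizing the Pauli group. -/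
def IsClifford1 (U : Matrix (Fin 2) (Fin 2) ℂ) : Prop :=
  U ∈ Matrix.unitaryGroup (Fin 2) ℂ ∧ ∀ g ∈ Pauli1, U * g * Uᴴ ∈ Pauli1

/-- The single-qubit operator `A` acting on qubit `v` (identity elsewhere). -/
def applyOn {n : ℕ} (v : Fin n) (A : Matrix (Fin 2) (Fin 2) ℂ) : QOp n :=
  Matrix.of fun x y => if ∀ u, u ≠ v → x u = y u then A (x v) (y v) else 0

/-- The tensor product `A 0 ⊗ A 1 ⊗ ⋯ ⊗ A (n-1)` of single-qubit operators. -/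
def tensorOp {n : ℕ} (A : Fin n → Matrix (Fin 2) (Fin 2) ℂ) : QOp n :=
  Matrix.of fun x y => ∏ j, A j (x j) (y j)

/-- The diagonal phase `(-1)^{x_u · x_v}` attached to an edge `e = {u,v}`. -/
def czPhase {n : ℕ} (e : Sym2 (Fin n)) (x : Fin n → Fin 2) : ℂ :=
  Sym2.lift ⟨fun u v => (-1 : ℂ) ^ ((x u : ℕ) * (x v : ℕ)),
    fun u v => by dsimp only; rw [mul_comm ((x u : ℕ)) ((x v : ℕ))]⟩ e

/-- The controlled-Z operator on qubits `u`, `v`: diagonal with entries `(-1)^{x_u x_v}`. -/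
def CZop {n : ℕ} (u v : Fin n) : QOp n :=
  Matrix.diagonal fun x => (-1 : ℂ) ^ ((x u : ℕ) * (x v : ℕ))

/-- The product of the (commuting, diagonal) controlled-Z operators over a set of edges. -/
def CZofEdges {n : ℕ} (E : Finset (Sym2 (Fin n))) : QOp n :=
  Matrix.diagonal fun x => ∏ e ∈ E, czPhase e x

/-- The state `|+⟩^{⊗n}`. -/
def plusState (n : ℕ) : QState n := fun _ => ((1 / Real.sqrt 2 : ℝ) : ℂ) ^ n

/-- The basis state `|0⟩^{⊗n}`. -/
def ket0 (n : ℕ) : QState n := fun x => if x = fun _ => 0 then 1 else 0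

/-- The graph state `|G⟩ = (∏_{{u,v} ∈ E} CZ_{u,v}) |+⟩^{⊗n}`. -/
def graphState {n : ℕ} (G : SimpleGraph (Fin n)) : QState n :=
  (CZofEdges G.edgeFinset).mulVec (plusState n)

/-- Local complementation of `G` about the vertex `v`: the edges inside the
neighbourhood of `v` are toggled. -/
def localComp {V : Type*} (G : SimpleGraph V) (v : V) : SimpleGraph V where
  Adj a b := (G.Adj a v ∧ G.Adj b v ∧ a ≠ b ∧ ¬ G.Adj a b) ∨ (G.Adj a b ∧ ¬ (G.Adj a v ∧ G.Adj b v))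
  symm := by
    constructor
    intro a b h
    rcases h with ⟨h1, h2, h3, h4⟩ | ⟨h1, h2⟩
    · exact Or.inl ⟨h2, h1, h3.symm, fun hc => h4 hc.symm⟩
    · exact Or.inr ⟨h1.symm, fun hc => h2 ⟨hc.2, hc.1⟩⟩
  loopless := by
    constructor
    intro a h
    rcases h with ⟨_, _, h3, _⟩ | ⟨h1, _⟩
    · exact h3 rfl
    · exact G.irrefl h1

/-- The (diagonal) product `∏_{u ∈ S} Z_u` of Pauli `Z` operators over the qubits in `S`. -/
def pauliZprod {n : ℕ} (S : Finset (Fin n)) : QOp n :=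
  Matrix.diagonal fun x => ∏ u ∈ S, PauliZ (x u) (x u)

/-- The `n`-qubit Pauli group: matrices `i^k · (g_1 ⊗ ⋯ ⊗ g_n)` with `g_j ∈ {I,X,Y,Z}`. -/
def PauliGroup (n : ℕ) : Set (QOp n) :=
  {M | ∃ (k : Fin 4) (g : Fin n → Matrix (Fin 2) (Fin 2) ℂ),
    (∀ j, g j ∈ ({1, PauliX, PauliY, PauliZ} : Set (Matrix (Fin 2) (Fin 2) ℂ))) ∧
    M = Complex.I ^ (k : ℕ) • tensorOp g}

/-- An `n`-qubit Clifford unitary: a unitary normalizing the `n`-qubit Pauli group. -/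
def IsCliffordN (n : ℕ) (U : QOp n) : Prop :=
  U ∈ Matrix.unitaryGroup (Fin n → Fin 2) ℂ ∧ ∀ g ∈ PauliGroup n, U * g * Uᴴ ∈ PauliGroup n

/-- The six-element set `R` of allowed vertex operators of an rGS-LC diagram. -/
def Rset : Set (Matrix (Fin 2) (Fin 2) ℂ) :=
  {M | (∃ k : Fin 4, M = Zrot ((k : ℕ) * (Real.pi / 2))) ∨
    M = Xrot (Real.pi / 2) * Zrot (Real.pi / 2) ∨
    M = Xrot (Real.pi / 2) * Zrot (3 * Real.pi / 2)}

/-- The two elements of `R` that have a red node. -/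
def hasRedNode (M : Matrix (Fin 2) (Fin 2) ℂ) : Prop :=
  M = Xrot (Real.pi / 2) * Zrot (Real.pi / 2) ∨ M = Xrot (Real.pi / 2) * Zrot (3 * Real.pi / 2)

/-- An rGS-LC datum: all vertex operators in `R`, and no two adjacent vertices both
have vertex operators with a red node. -/
def IsRGSLC {n : ℕ} (G : SimpleGraph (Fin n)) (A : Fin n → Matrix (Fin 2) (Fin 2) ℂ) : Prop :=
  (∀ v, A v ∈ Rset) ∧ ∀ v w, G.Adj v w → ¬ (hasRedNode (A v) ∧ hasRedNode (A w))

/-- The state `|G; A⟩ = (A_1 ⊗ ⋯ ⊗ A_n)|G⟩` of a GS-LC datum. -/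
def rgslcState {n : ℕ} (G : SimpleGraph (Fin n)) (A : Fin n → Matrix (Fin 2) (Fin 2) ℂ) :
    QState n :=
  (tensorOp A).mulVec (graphState G)

/-- A pair of rGS-LC data is simplified if there is no pair of vertices `p`, `q` with an
unpaired red node at `p` in the first diagram and at `q` in the second, `p`, `q` adjacent
in one of the graphs. -/
def SimplifiedPair {n : ℕ} (G₁ : SimpleGraph (Fin n)) (A : Fin n → Matrix (Fin 2) (Fin 2) ℂ)
    (G₂ : SimpleGraph (Fin n)) (B : Fin n → Matrix (Fin 2) (Fin 2) ℂ) : Prop :=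
  ¬ ∃ p q, (hasRedNode (A p) ∧ ¬ hasRedNode (B p)) ∧ (hasRedNode (B q) ∧ ¬ hasRedNode (A q)) ∧
    (G₁.Adj p q ∨ G₂.Adj p q)

set_option maxHeartbeats 4000000 in
/-- Local complementation along an edge is symmetric in the two endpoints:
`((G⋆v)⋆w)⋆v = ((G⋆w)⋆v)⋆w` whenever `{v,w}` is an edge. -/
theorem localComp_edge_symm {V : Type*} [Fintype V] (G : SimpleGraph V) (v w : V)
    (hne : v ≠ w) (hvw : G.Adj v w) :
    localComp (localComp (localComp G v) w) v = localComp (localComp (localComp G w) v) w := by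
  have hwv : G.Adj w v := hvw.symm
  have hne' : w ≠ v := hne.symm
  have i1 : ¬ G.Adj v v := G.irrefl
  have i2 : ¬ G.Adj w w := G.irrefl
  ext a b
  simp only [localComp]
  by_cases hav : a = v
  · by_cases hbv : b = v
    · simp only [hav, hbv, hvw, hwv, hne, hne', i1, i2, ne_eq, not_false_iff, true_and,
        and_true, false_and, and_false, true_or, or_true, false_or, or_false, not_not,
        not_true, and_self] <;> tauto
    · by_cases hbw : b = w
      · simp only [hav, hbw, hvw, hwv, hne, hne', i1, i2, ne_eq, not_false_iff, true_and,
          and_true, false_and, and_false, true_or, or_true, false_or, or_false, not_not,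
          not_true, and_self] <;> tauto
      · have hbv' : ¬ v = b := fun h => hbv h.symm
        have hbw' : ¬ w = b := fun h => hbw h.symm
        by_cases p3 : G.Adj b v <;> by_cases p4 : G.Adj b w <;>
          simp only [hav, hvw, hwv, hne, hne', i1, i2, hbv, hbw, hbv', hbw',
            G.adj_comm v b, G.adj_comm w b, p3, p4, ne_eq, not_false_iff, true_and,
            and_true, false_and, and_false, true_or, or_true, false_or, or_false, not_not,
            not_true, and_self] <;> tauto
  by_cases haw : a = w
  · by_cases hbv : b = v
    · simp only [haw, hbv, hvw, hwv, hne, hne', i1, i2, ne_eq, not_false_iff, true_and,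
        and_true, false_and, and_false, true_or, or_true, false_or, or_false, not_not,
        not_true, and_self] <;> tauto
    · by_cases hbw : b = w
      · simp only [haw, hbw, hvw, hwv, hne, hne', i1, i2, ne_eq, not_false_iff, true_and,
          and_true, false_and, and_false, true_or, or_true, false_or, or_false, not_not,
          not_true, and_self] <;> tauto
      · have hbv' : ¬ v = b := fun h => hbv h.symm
        have hbw' : ¬ w = b := fun h => hbw h.symm
        by_cases p3 : G.Adj b v <;> by_cases p4 : G.Adj b w <;>
          simp only [haw, hvw, hwv, hne, hne', i1, i2, hbv, hbw, hbv', hbw',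
            G.adj_comm v b, G.adj_comm w b, p3, p4, ne_eq, not_false_iff, true_and,
            and_true, false_and, and_false, true_or, or_true, false_or, or_false, not_not,
            not_true, and_self] <;> tauto
  have hav' : ¬ v = a := fun h => hav h.symm
  have haw' : ¬ w = a := fun h => haw h.symm
  by_cases hbv : b = v
  · by_cases p1 : G.Adj a v <;> by_cases p2 : G.Adj a w <;>
      simp only [hbv, hvw, hwv, hne, hne', i1, i2, hav, haw, hav', haw',
        G.adj_comm v a, G.adj_comm w a, p1, p2, ne_eq, not_false_iff, true_and,
        and_true, false_and, and_false, true_or, or_true, false_or, or_false, not_not,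
        not_true, and_self] <;> tauto
  by_cases hbw : b = w
  · by_cases p1 : G.Adj a v <;> by_cases p2 : G.Adj a w <;>
      simp only [hbw, hvw, hwv, hne, hne', i1, i2, hav, haw, hav', haw',
        G.adj_comm v a, G.adj_comm w a, p1, p2, ne_eq, not_false_iff, true_and,
        and_true, false_and, and_false, true_or, or_true, false_or, or_false, not_not,
        not_true, and_self] <;> tauto
  have hbv' : ¬ v = b := fun h => hbv h.symm
  have hbw' : ¬ w = b := fun h => hbw h.symm
  by_cases hab : a = b
  · have i3 : ¬ G.Adj b b := G.irrefl
    by_cases p1 : G.Adj b v <;> by_cases p2 : G.Adj b w <;>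
      simp only [hab, hvw, hwv, hne, hne', i1, i2, i3, hbv, hbw, hbv', hbw',
        G.adj_comm v b, G.adj_comm w b, p1, p2, ne_eq, not_false_iff, true_and,
        and_true, false_and, and_false, true_or, or_true, false_or, or_false, not_not,
        not_true, and_self] <;> tauto
  by_cases p1 : G.Adj a v <;> by_cases p2 : G.Adj a w <;> by_cases p3 : G.Adj b v <;>
    by_cases p4 : G.Adj b w <;> by_cases p5 : G.Adj a b <;>
    simp only [hav, haw, hbv, hbw, hab, hne, hne', hvw, hwv, i1, i2, p1, p2, p3, p4, p5,
      ne_eq, not_false_iff, true_and, and_true, false_and, and_false,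
      true_or, or_true, false_or, or_false, not_not] <;> tauto
end
end

section
/- Let G = (V,E) be a finite simple graph, let {v,w} ∈ E with v ≠ w, and let G' = ((G⋆v)⋆w)⋆v be the local complementation of G along the edge {v,w}. For distinct vertices p, q ∈ V \ {v,w}, let P := N_G(p) ∩ {v,w} and Q := N_G(q) ∩ {v,w}, where N_G denotes the neighbourhood in G. Then the edge {p,q} is toggled (i.e. {p,q} is an edge of G' if and only if it is not an edge of G) precisely when P, Q and ∅ are pairwise distinct, i.e. when P ≠ ∅, Q ≠ ∅ and P ≠ Q. -/
open scoped Matrix BigOperators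
open scoped Classical

noncomputable section

lemma localComp_adj {V : Type*} (G : SimpleGraph V) (v a b : V) :
    (localComp G v).Adj a b ↔
      (G.Adj a v ∧ G.Adj b v ∧ a ≠ b ∧ ¬ G.Adj a b) ∨ (G.Adj a b ∧ ¬ (G.Adj a v ∧ G.Adj b v)) :=
  Iff.rfl

/-- For `G' = ((G⋆v)⋆w)⋆v` the local complementation along an edge `{v,w}` and distinct
vertices `p, q ∉ {v,w}`, with `P = N_G(p) ∩ {v,w}` and `Q = N_G(q) ∩ {v,w}`: the edge
`{p,q}` is toggled precisely when `P`, `Q` and `∅` are pairwise distinct. -/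
theorem localComp_edge_toggle {V : Type*} [Fintype V] (G : SimpleGraph V) (v w : V)
    (hne : v ≠ w) (hvw : G.Adj v w) (p q : V) (hpq : p ≠ q)
    (hpv : p ≠ v) (hpw : p ≠ w) (hqv : q ≠ v) (hqw : q ≠ w) :
    ((localComp (localComp (localComp G v) w) v).Adj p q ↔ ¬ G.Adj p q) ↔
      (G.neighborSet p ∩ {v, w} ≠ ∅ ∧ G.neighborSet q ∩ {v, w} ≠ ∅ ∧
        G.neighborSet p ∩ {v, w} ≠ G.neighborSet q ∩ {v, w}) := by
  have hRHS : (G.neighborSet p ∩ {v, w} ≠ ∅ ∧ G.neighborSet q ∩ {v, w} ≠ ∅ ∧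
        G.neighborSet p ∩ {v, w} ≠ G.neighborSet q ∩ {v, w}) ↔
      ((G.Adj p v ∨ G.Adj p w) ∧ (G.Adj q v ∨ G.Adj q w) ∧
        ¬((G.Adj p v ↔ G.Adj q v) ∧ (G.Adj p w ↔ G.Adj q w))) := by
    constructor
    · rintro ⟨h1, h2, h3⟩
      refine ⟨?_, ?_, ?_⟩
      · rcases Set.nonempty_iff_ne_empty.2 h1 with ⟨x, hx, hx2⟩
        rcases hx2 with rfl | rfl
        · exact Or.inl hx
        · exact Or.inr hx
      · rcases Set.nonempty_iff_ne_empty.2 h2 with ⟨x, hx, hx2⟩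
        rcases hx2 with rfl | rfl
        · exact Or.inl hx
        · exact Or.inr hx
      · rintro ⟨e1, e2⟩
        apply h3
        ext x
        simp only [Set.mem_inter_iff, SimpleGraph.mem_neighborSet, Set.mem_insert_iff,
          Set.mem_singleton_iff]
        constructor
        · rintro ⟨hx, rfl | rfl⟩
          exacts [⟨e1.1 hx, Or.inl rfl⟩, ⟨e2.1 hx, Or.inr rfl⟩]
        · rintro ⟨hx, rfl | rfl⟩
          exacts [⟨e1.2 hx, Or.inl rfl⟩, ⟨e2.2 hx, Or.inr rfl⟩]
    · rintro ⟨h1, h2, h3⟩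
      refine ⟨?_, ?_, ?_⟩
      · intro he
        rcases h1 with h | h
        · exact absurd (Set.ext_iff.1 he v).1 (by simp [h])
        · exact absurd (Set.ext_iff.1 he w).1 (by simp [h])
      · intro he
        rcases h2 with h | h
        · exact absurd (Set.ext_iff.1 he v).1 (by simp [h])
        · exact absurd (Set.ext_iff.1 he w).1 (by simp [h])
      · intro he
        apply h3
        constructor
        · constructor
          · intro h; exact ((Set.ext_iff.1 he v).1 ⟨h, Or.inl rfl⟩).1
          · intro h; exact ((Set.ext_iff.1 he v).2 ⟨h, Or.inl rfl⟩).1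
        · constructor
          · intro h; exact ((Set.ext_iff.1 he w).1 ⟨h, Or.inr rfl⟩).1
          · intro h; exact ((Set.ext_iff.1 he w).2 ⟨h, Or.inr rfl⟩).1
  rw [hRHS]
  have hwv := hvw.symm
  by_cases ha : G.Adj p v <;> by_cases hb : G.Adj p w <;>
    by_cases hc : G.Adj q v <;> by_cases hd : G.Adj q w <;>
      simp_all [localComp_adj, G.adj_comm v p, G.adj_comm v q, G.adj_comm w p, G.adj_comm w q,
        G.adj_comm w v, G.adj_comm q p, hpq, hpv, hpw, hqv, hqw, hne, hpq.symm, hpv.symm,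
        hpw.symm, hqv.symm, hqw.symm, hne.symm]
end
end

section
/- Let G be a finite simple graph on vertex set Fin n, let {v,w} be an edge of G with v ≠ w, and let G' = ((G⋆v)⋆w)⋆v be the local complementation of G along {v,w}. Then there exists a complex unit scalar c such that |G⟩ = c · (∏_{j} (U'_j)_j) |G'⟩, where U'_j = R_Z·R_X^{-1}·R_Z if j ∈ {v,w}; U'_j = Z if j ∉ {v,w} and j is adjacent in G to v or to w; and U'_j = I otherwise. Here R_Z = diag(1,i), R_X = H·R_Z·H, H = (1/√2)[[1,1],[1,-1]], Z = [[1,0],[0,-1]], and (A)_j denotes the single-qubit operator A acting on qubit j. -/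
open scoped Matrix BigOperators
open scoped Classical

noncomputable section

/- ===== auxiliary machinery ===== -/
section Aux
open Finset
variable {n : ℕ}

noncomputable def sgn (t : ZMod 2) : ℂ := (-1) ^ t.val
lemma zcases : ∀ t : ZMod 2, t = 0 ∨ t = 1 := by decide
lemma sgn_zero : sgn 0 = 1 := rfl
lemma sgn_one : sgn 1 = -1 := by norm_num [sgn, show (1 : ZMod 2).val = 1 from rfl]
lemma sgn_add (a b : ZMod 2) : sgn (a+b) = sgn a * sgn b := by
  rcases zcases a with rfl|rfl <;> rcases zcases b with rfl|rfl <;>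
    simp [sgn, show (0 : ZMod 2).val = 0 from rfl, show (1 : ZMod 2).val = 1 from rfl,
      show (1 + 1 : ZMod 2).val = 0 from rfl]
lemma neg_one_pow_natCast (m : ℕ) : ((-1 : ℂ)) ^ m = sgn (m : ZMod 2) := by
  induction m with
  | zero => simp [sgn_zero]
  | succ k ih => rw [pow_succ, ih, Nat.cast_add, Nat.cast_one, sgn_add, sgn_one]

lemma sq_parity (m : ℕ) : ((-1 : ℂ)) ^ (m * m) = (-1) ^ m := by
  rw [neg_one_pow_natCast, neg_one_pow_natCast, Nat.cast_mul]
  rcases zcases ((m : ZMod 2)) with h | h <;> rw [h] <;> norm_num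

lemma neg_one_pow_self_mul (m : ℕ) : ((-1 : ℂ)) ^ m * (-1) ^ m = 1 := by
  rw [← pow_add, ← two_mul, pow_mul]; norm_num

/-- `D` is the vertex set minus `v` and `w`. -/
def Dset (v w : Fin n) : Finset (Fin n) := (univ.erase v).erase w

lemma mem_Dset {v w k : Fin n} : k ∈ Dset v w ↔ k ≠ w ∧ k ≠ v := by
  simp [Dset, and_comm]

lemma sum_split {M : Type*} [AddCommMonoid M] {v w : Fin n} (hne : v ≠ w) (f : Fin n → M) :
    ∑ j, f j = f v + (f w + ∑ j ∈ Dset v w, f j) := by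
  rw [← Finset.add_sum_erase _ f (mem_univ v),
    ← Finset.add_sum_erase _ f (Finset.mem_erase.2 ⟨hne.symm, mem_univ w⟩)]
  rfl

lemma prod_split {M : Type*} [CommMonoid M] {v w : Fin n} (hne : v ≠ w) (f : Fin n → M) :
    ∏ j, f j = f v * (f w * ∏ j ∈ Dset v w, f j) := by
  rw [← Finset.mul_prod_erase _ f (mem_univ v),
    ← Finset.mul_prod_erase _ f (Finset.mem_erase.2 ⟨hne.symm, mem_univ w⟩)]
  rfl

/- ===== double counting: edge products as ordered-pair sums ===== -/

def ltAdj (H : SimpleGraph (Fin n)) : Finset (Fin n × Fin n) :=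
  univ.filter (fun p : Fin n × Fin n => p.1 < p.2 ∧ H.Adj p.1 p.2)

lemma edge_sum (H : SimpleGraph (Fin n)) {M : Type*} [AddCommMonoid M]
    (f : Fin n → Fin n → M) (hf : ∀ u v, f u v = f v u) :
    ∑ e ∈ H.edgeFinset, Sym2.lift ⟨f, hf⟩ e = ∑ p ∈ ltAdj H, f p.1 p.2 := by
  classical
  symm; refine Finset.sum_bij (fun p _ => s(p.1, p.2)) ?_ ?_ ?_ ?_
  · rintro ⟨a,b⟩ hp
    simp only [ltAdj, mem_filter] at hp
    simpa [SimpleGraph.mem_edgeFinset] using hp.2.2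
  · rintro ⟨a,b⟩ ha ⟨c,d⟩ hc h
    simp only [ltAdj, mem_filter] at ha hc
    rcases Sym2.eq_iff.1 h with ⟨rfl, rfl⟩ | ⟨rfl, rfl⟩
    · rfl
    · exact absurd (ha.2.1.trans hc.2.1) (lt_irrefl _)
  · intro e he
    induction e using Sym2.ind with
    | _ u v =>
      have hadj : H.Adj u v := by simpa [SimpleGraph.mem_edgeFinset] using he
      rcases lt_or_gt_of_ne hadj.ne with h | h
      · exact ⟨(u,v), by simp [ltAdj, h, hadj], rfl⟩
      · exact ⟨(v,u), by simp [ltAdj, h, hadj.symm], Sym2.eq_swap⟩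
  · rintro ⟨a,b⟩ hp
    simp

def tN (H : SimpleGraph (Fin n)) (y : Fin n → Fin 2) : ℕ :=
  ∑ j, ∑ k, if H.Adj j k then (y j : ℕ) * (y k : ℕ) else 0

lemma tN_eq (H : SimpleGraph (Fin n)) (y : Fin n → Fin 2) :
    tN H y = 2 * ∑ p ∈ ltAdj H, (y p.1 : ℕ) * (y p.2 : ℕ) := by
  classical
  set F : Fin n × Fin n → ℕ := fun p => if H.Adj p.1 p.2 then (y p.1 : ℕ) * (y p.2 : ℕ) else 0 with hF
  have h1 : tN H y = ∑ p ∈ (univ ×ˢ univ : Finset (Fin n × Fin n)), F p := by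
    rw [Finset.sum_product]; rfl
  have h3 : ∑ p ∈ (univ ×ˢ univ).filter (fun p : Fin n × Fin n => ¬ p.1 < p.2), F p
      = ∑ p ∈ (univ ×ˢ univ).filter (fun p : Fin n × Fin n => p.2 < p.1), F p := by
    refine (Finset.sum_subset ?_ ?_).symm
    · intro p hp; simp only [mem_filter] at hp ⊢; exact ⟨hp.1, not_lt_of_gt hp.2⟩
    · intro p hp hnp
      simp only [mem_filter, mem_product] at hp hnp
      have he : p.1 = p.2 := le_antisymm (not_lt.1 (hnp ∘ fun h => ⟨hp.1, h⟩)) (not_lt.1 hp.2)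
      simp [hF, he]
  have h4 : ∑ p ∈ (univ ×ˢ univ).filter (fun p : Fin n × Fin n => p.2 < p.1), F p
      = ∑ p ∈ (univ ×ˢ univ).filter (fun p : Fin n × Fin n => p.1 < p.2), F p := by
    refine Finset.sum_nbij' (fun p => (p.2, p.1)) (fun p => (p.2, p.1)) ?_ ?_ ?_ ?_ ?_
    · intro p hp; simp only [mem_filter, mem_product] at hp ⊢; exact ⟨⟨hp.1.2, hp.1.1⟩, hp.2⟩
    · intro p hp; simp only [mem_filter, mem_product] at hp ⊢; exact ⟨⟨hp.1.2, hp.1.1⟩, hp.2⟩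
    · intro p _; rfl
    · intro p _; rfl
    · intro p _
      by_cases h : H.Adj p.1 p.2
      · simp [hF, h, h.symm, Nat.mul_comm]
      · have h' : ¬ H.Adj p.2 p.1 := fun hc => h hc.symm
        simp [hF, h, h']
  have h5 : ∑ p ∈ (univ ×ˢ univ).filter (fun p : Fin n × Fin n => p.1 < p.2), F p
      = ∑ p ∈ ltAdj H, (y p.1 : ℕ) * (y p.2 : ℕ) := by
    rw [ltAdj, ← Finset.univ_product_univ, Finset.sum_filter, Finset.sum_filter]
    refine Finset.sum_congr rfl ?_
    intro p _
    by_cases h : p.1 < p.2 <;> by_cases h2 : H.Adj p.1 p.2 <;> simp [hF, h, h2]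
  rw [h1, ← Finset.sum_filter_add_sum_filter_not (univ ×ˢ univ) (fun p : Fin n × Fin n => p.1 < p.2) F,
    h3, h4, h5, two_mul]

lemma prod_czPhase (H : SimpleGraph (Fin n)) (y : Fin n → Fin 2) :
    ∏ e ∈ H.edgeFinset, czPhase e y = Complex.I ^ tN H y := by
  classical
  have h1 : ∀ e ∈ H.edgeFinset, czPhase e y
      = ((-1 : ℂ)) ^ Sym2.lift ⟨fun u v => (y u : ℕ) * (y v : ℕ),
          fun u v => Nat.mul_comm _ _⟩ e := by
    intro e _
    induction e using Sym2.ind with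
    | _ u v => simp [czPhase]
  rw [Finset.prod_congr rfl h1, Finset.prod_pow_eq_pow_sum,
    edge_sum H (fun u v => (y u : ℕ) * (y v : ℕ)) (fun u v => Nat.mul_comm _ _),
    tN_eq, pow_mul]
  norm_num

/- ===== splitting tN at two vertices ===== -/

lemma tN_split (H : SimpleGraph (Fin n)) (y : Fin n → Fin 2) (v w : Fin n) (hne : v ≠ w) :
    tN H y = 2*((if H.Adj v w then (y v : ℕ)*(y w : ℕ) else 0)
      + ∑ k ∈ Dset v w, (if H.Adj v k then (y v : ℕ)*(y k : ℕ) else 0)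
      + ∑ k ∈ Dset v w, (if H.Adj w k then (y w : ℕ)*(y k : ℕ) else 0))
      + ∑ j ∈ Dset v w, ∑ k ∈ Dset v w, (if H.Adj j k then (y j : ℕ)*(y k : ℕ) else 0) := by
  classical
  have e1 : ∀ j, (∑ k, if H.Adj j k then (y j : ℕ)*(y k : ℕ) else 0)
      = (if H.Adj j v then (y j : ℕ)*(y v : ℕ) else 0)
        + ((if H.Adj j w then (y j : ℕ)*(y w : ℕ) else 0)
        + ∑ k ∈ Dset v w, if H.Adj j k then (y j : ℕ)*(y k : ℕ) else 0) :=
    fun j => sum_split hne _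
  have start : tN H y
      = (∑ k, if H.Adj v k then (y v : ℕ)*(y k : ℕ) else 0)
        + ((∑ k, if H.Adj w k then (y w : ℕ)*(y k : ℕ) else 0)
        + ∑ j ∈ Dset v w, ∑ k, if H.Adj j k then (y j : ℕ)*(y k : ℕ) else 0) :=
    sum_split hne _
  rw [start, e1 v, e1 w, Finset.sum_congr rfl (fun j _ => e1 j)]
  have hvv : (if H.Adj v v then (y v : ℕ)*(y v : ℕ) else 0) = 0 :=
    if_neg (fun h => H.irrefl h)
  have hww : (if H.Adj w w then (y w : ℕ)*(y w : ℕ) else 0) = 0 :=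
    if_neg (fun h => H.irrefl h)
  have hwv : (if H.Adj w v then (y w : ℕ)*(y v : ℕ) else 0)
      = (if H.Adj v w then (y v : ℕ)*(y w : ℕ) else 0) := by
    by_cases h : H.Adj v w
    · simp [h, h.symm, Nat.mul_comm]
    · have h' : ¬ H.Adj w v := fun hc => h hc.symm
      simp [h, h']
  have hcol : ∀ u : Fin n, (∑ j ∈ Dset v w, if H.Adj j u then (y j : ℕ)*(y u : ℕ) else 0)
      = ∑ k ∈ Dset v w, if H.Adj u k then (y u : ℕ)*(y k : ℕ) else 0 := by
    intro u
    refine Finset.sum_congr rfl ?_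
    intro j _
    by_cases h : H.Adj u j
    · simp [h, h.symm, Nat.mul_comm]
    · have h' : ¬ H.Adj j u := fun hc => h hc.symm
      simp [h, h']
  rw [Finset.sum_add_distrib, Finset.sum_add_distrib, hvv, hww, hwv, hcol v, hcol w]
  ring

/- ===== evenness of symmetric double sums ===== -/

lemma even_sum_sym (D : Finset (Fin n)) (h : Fin n → Fin n → ℕ)
    (hsym : ∀ j k, h j k = h k j) (hdiag : ∀ j, h j j = 0) :
    Even (∑ j ∈ D, ∑ k ∈ D, h j k) := by
  classical
  induction D using Finset.induction with
  | empty => simp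
  | @insert a s ha ih =>
    have e1 : ∀ j, ∑ k ∈ insert a s, h j k = h j a + ∑ k ∈ s, h j k :=
      fun j => Finset.sum_insert ha
    rw [Finset.sum_insert ha, e1 a, Finset.sum_congr rfl (fun j _ => e1 j),
      Finset.sum_add_distrib, hdiag a]
    have e2 : ∑ j ∈ s, h j a = ∑ k ∈ s, h a k := Finset.sum_congr rfl (fun j _ => hsym j a)
    rw [e2]
    obtain ⟨m, hm⟩ := ih
    exact ⟨(∑ k ∈ s, h a k) + m, by omega⟩
end Aux

/- ===== local complementation adjacency lemmas ===== -/
section Pivot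
open Finset
variable {n : ℕ}
lemma lc_adj {V : Type*} (G : SimpleGraph V) (u a b : V) :
    (localComp G u).Adj a b ↔ Xor' (G.Adj a b) (G.Adj a u ∧ G.Adj b u ∧ a ≠ b) := by
  show _ ∨ _ ↔ _
  have h1 : G.Adj a b → a ≠ b := fun h => h.ne
  unfold Xor' Xor
  tauto

lemma lc_adj_left {V : Type*} (G : SimpleGraph V) (u b : V) :
    (localComp G u).Adj u b ↔ G.Adj u b := by
  rw [lc_adj]; have : ¬ G.Adj u u := G.irrefl; unfold Xor' Xor; tauto

lemma lc_adj_right {V : Type*} (G : SimpleGraph V) (u a : V) :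
    (localComp G u).Adj a u ↔ G.Adj a u := by
  rw [lc_adj]; have : ¬ G.Adj u u := G.irrefl; unfold Xor' Xor; tauto

lemma pivot_adj_vw (G : SimpleGraph (Fin n)) (v w : Fin n) (hvw : G.Adj v w) :
    (localComp (localComp (localComp G v) w) v).Adj v w := by
  rw [lc_adj_left, lc_adj_right, lc_adj_left]; exact hvw

lemma g1_wk (G : SimpleGraph (Fin n)) (v w : Fin n) (hvw : G.Adj v w) (k : Fin n)
    (hkv : k ≠ v) (hkw : k ≠ w) :
    (localComp G v).Adj w k ↔ Xor' (G.Adj w k) (G.Adj v k) := by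
  rw [lc_adj]
  have h1 := G.adj_comm v w
  have h2 := G.adj_comm v k
  have h3 : w ≠ k := hkw.symm
  by_cases a1 : G.Adj w k <;> by_cases a2 : G.Adj v k <;> simp_all [Xor']

lemma g1_kw (G : SimpleGraph (Fin n)) (v w : Fin n) (hvw : G.Adj v w) (k : Fin n)
    (hkv : k ≠ v) (hkw : k ≠ w) :
    (localComp G v).Adj k w ↔ Xor' (G.Adj w k) (G.Adj v k) := by
  rw [(localComp G v).adj_comm]; exact g1_wk G v w hvw k hkv hkw

lemma g2_vk (G : SimpleGraph (Fin n)) (v w : Fin n) (hvw : G.Adj v w) (k : Fin n)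
    (hkv : k ≠ v) (hkw : k ≠ w) :
    (localComp (localComp G v) w).Adj v k ↔ G.Adj w k := by
  rw [lc_adj, lc_adj_left, lc_adj_left, g1_kw G v w hvw k hkv hkw]
  have h3 : v ≠ k := hkv.symm
  by_cases a1 : G.Adj w k <;> by_cases a2 : G.Adj v k <;> simp_all [Xor']

lemma g2_kv (G : SimpleGraph (Fin n)) (v w : Fin n) (hvw : G.Adj v w) (k : Fin n)
    (hkv : k ≠ v) (hkw : k ≠ w) :
    (localComp (localComp G v) w).Adj k v ↔ G.Adj w k := by
  rw [(localComp (localComp G v) w).adj_comm]; exact g2_vk G v w hvw k hkv hkw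

lemma g2_wk (G : SimpleGraph (Fin n)) (v w : Fin n) (hvw : G.Adj v w) (k : Fin n)
    (hkv : k ≠ v) (hkw : k ≠ w) :
    (localComp (localComp G v) w).Adj w k ↔ Xor' (G.Adj w k) (G.Adj v k) := by
  rw [lc_adj_left]; exact g1_wk G v w hvw k hkv hkw

lemma g2_wv (G : SimpleGraph (Fin n)) (v w : Fin n) :
    (localComp (localComp G v) w).Adj w v ↔ G.Adj v w := by
  rw [lc_adj_left, (localComp G v).adj_comm, lc_adj_left]

lemma pivot_adj_v (G : SimpleGraph (Fin n)) (v w : Fin n) (hvw : G.Adj v w) (k : Fin n)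
    (hkv : k ≠ v) (hkw : k ≠ w) :
    (localComp (localComp (localComp G v) w) v).Adj v k ↔ G.Adj w k := by
  rw [lc_adj_left]; exact g2_vk G v w hvw k hkv hkw

lemma pivot_adj_w (G : SimpleGraph (Fin n)) (v w : Fin n) (hvw : G.Adj v w) (k : Fin n)
    (hkv : k ≠ v) (hkw : k ≠ w) :
    (localComp (localComp (localComp G v) w) v).Adj w k ↔ G.Adj v k := by
  rw [lc_adj, g2_wk G v w hvw k hkv hkw, g2_wv G v w, g2_kv G v w hvw k hkv hkw]
  have h3 : w ≠ k := hkw.symm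
  by_cases a1 : G.Adj w k <;> by_cases a2 : G.Adj v k <;> simp_all [Xor']

lemma g1_jk (G : SimpleGraph (Fin n)) (v : Fin n) (j k : Fin n) (hjk : j ≠ k) :
    (localComp G v).Adj j k ↔ Xor' (G.Adj j k) (G.Adj v j ∧ G.Adj v k) := by
  rw [lc_adj]
  have h2 := G.adj_comm v k
  have h3 := G.adj_comm v j
  by_cases a1 : G.Adj j k <;> by_cases a2 : G.Adj v k <;> by_cases a3 : G.Adj v j <;>
    simp_all [Xor']

lemma g2_jk (G : SimpleGraph (Fin n)) (v w : Fin n) (hvw : G.Adj v w) (j k : Fin n)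
    (hjv : j ≠ v) (hjw : j ≠ w) (hkv : k ≠ v) (hkw : k ≠ w) (hjk : j ≠ k) :
    (localComp (localComp G v) w).Adj j k ↔
    Xor' (Xor' (G.Adj j k) (G.Adj v j ∧ G.Adj v k))
      (Xor' (G.Adj w j) (G.Adj v j) ∧ Xor' (G.Adj w k) (G.Adj v k)) := by
  rw [lc_adj, g1_jk G v j k hjk,
    g1_kw G v w hvw j hjv hjw, g1_kw G v w hvw k hkv hkw]
  simp [Xor', hjk]

lemma g2_jv (G : SimpleGraph (Fin n)) (v w : Fin n) (hvw : G.Adj v w) (j : Fin n)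
    (hjv : j ≠ v) (hjw : j ≠ w) :
    (localComp (localComp G v) w).Adj j v ↔ G.Adj w j := by
  rw [(localComp (localComp G v) w).adj_comm]
  rw [g2_vk G v w hvw j hjv hjw]

lemma pivot_adj_other (G : SimpleGraph (Fin n)) (v w : Fin n) (hvw : G.Adj v w) (j k : Fin n)
    (hjv : j ≠ v) (hjw : j ≠ w) (hkv : k ≠ v) (hkw : k ≠ w) (hjk : j ≠ k) :
    (localComp (localComp (localComp G v) w) v).Adj j k ↔
    Xor' (G.Adj j k) (Xor' (G.Adj v j ∧ G.Adj w k) (G.Adj w j ∧ G.Adj v k)) := by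
  rw [lc_adj, g2_jk G v w hvw j k hjv hjw hkv hkw hjk,
    g2_jv G v w hvw j hjv hjw, g2_jv G v w hvw k hkv hkw]
  by_cases a1 : G.Adj j k <;> by_cases a2 : G.Adj v j <;> by_cases a3 : G.Adj v k <;>
    by_cases a4 : G.Adj w j <;> by_cases a5 : G.Adj w k <;> simp_all [Xor']
end Pivot

/- ===== U matrix computation ===== -/
section Umat
lemma I3aux : Complex.I ^ 3 = -Complex.I := by
  rw [pow_succ, Complex.I_sq]; ring
lemma I4aux : Complex.I ^ 4 = 1 := by
  rw [pow_succ, I3aux]; simp [Complex.I_mul_I]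

lemma exp_pi_half : Complex.exp ((Real.pi/2 : ℝ) * Complex.I) = Complex.I := by
  rw [Complex.exp_mul_I, ← Complex.ofReal_cos, ← Complex.ofReal_sin,
    Real.cos_pi_div_two, Real.sin_pi_div_two]
  simp

lemma hc2 : ((1/Real.sqrt 2 : ℝ) : ℂ) * ((1/Real.sqrt 2 : ℝ) : ℂ) = 1/2 := by
  rw [← Complex.ofReal_mul, div_mul_div_comm, one_mul, Real.mul_self_sqrt (by norm_num)]
  norm_num

lemma xrot_eq : Xrot (Real.pi/2) = (1/2 : ℂ) • !![1+Complex.I, 1-Complex.I; 1-Complex.I, 1+Complex.I] := by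
  unfold Xrot Hmat
  rw [Matrix.smul_mul, Matrix.smul_mul, Matrix.mul_smul, smul_smul, hc2]
  congr 1
  unfold Zrot
  rw [exp_pi_half]
  ext i j
  fin_cases i <;> fin_cases j <;>
    · simp [Matrix.mul_apply, Fin.sum_univ_two, Matrix.one_apply]
      try ring_nf
      try simp only [I3aux, I4aux, Complex.I_sq]
      try ring_nf
      try norm_num

lemma xrot_inv : (Xrot (Real.pi/2))⁻¹
    = (1/2 : ℂ) • !![1-Complex.I, 1+Complex.I; 1+Complex.I, 1-Complex.I] := by
  apply Matrix.inv_eq_right_inv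
  rw [xrot_eq, Matrix.smul_mul, Matrix.mul_smul, smul_smul]
  ext i j
  fin_cases i <;> fin_cases j <;>
    · simp [Matrix.mul_apply, Fin.sum_univ_two, Matrix.one_apply]
      try ring_nf
      try simp only [I3aux, I4aux, Complex.I_sq]
      try ring_nf
      try norm_num

lemma Umat : Zrot (Real.pi/2) * (Xrot (Real.pi/2))⁻¹ * Zrot (Real.pi/2)
    = ((1 - Complex.I)/2) • !![(1:ℂ),-1;-1,-1] := by
  rw [xrot_inv]
  unfold Zrot
  rw [exp_pi_half, Matrix.mul_smul, Matrix.smul_mul]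
  ext i j
  fin_cases i <;> fin_cases j <;>
    · simp [Matrix.mul_apply, Fin.sum_univ_two, Matrix.one_apply]
      try ring_nf
      try simp only [I3aux, I4aux, Complex.I_sq]
      try ring_nf
      try norm_num
end Umat

/- ===== the key scalar identity ===== -/
section FinalScalar

lemma entry_eq (p a : Fin 2) :
    ((((1 - Complex.I)/2) • !![(1:ℂ),-1;-1,-1]) : Matrix (Fin 2) (Fin 2) ℂ) p a
    = ((1 - Complex.I)/2) * (-1:ℂ)^((p:ℕ)*(a:ℕ)+(p:ℕ)+(a:ℕ)) := by
  fin_cases p <;> fin_cases a <;> simp [Matrix.smul_apply] <;> norm_num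

set_option maxHeartbeats 1000000 in
lemma final_lemma (p q : Fin 2) (α β γ : ℕ) (W : ℂ) :
    ∑ a : Fin 2, ∑ b : Fin 2,
      ((((1 - Complex.I)/2) • !![(1:ℂ),-1;-1,-1]) p a *
      ((((1 - Complex.I)/2) • !![(1:ℂ),-1;-1,-1]) q b *
       ((-1:ℂ)^(α+β+γ) * ((-1:ℂ)^((a:ℕ)*(b:ℕ) + (a:ℕ)*β + (b:ℕ)*α) *
        ((-1:ℂ)^(α*β) * ((-1:ℂ)^γ * W))))))
    = Complex.I * ((-1:ℂ)^((p:ℕ)*(q:ℕ) + (p:ℕ)*α + (q:ℕ)*β) * W) := by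
  simp only [entry_eq, Fin.sum_univ_two, Fin.val_zero, Fin.val_one]
  simp only [neg_one_pow_natCast]
  push_cast
  rcases zcases (((p:ℕ) : ZMod 2)) with h1 | h1 <;>
  rcases zcases (((q:ℕ) : ZMod 2)) with h2 | h2 <;>
  rcases zcases ((α : ZMod 2)) with h3 | h3 <;>
  rcases zcases ((β : ZMod 2)) with h4 | h4 <;>
  rcases zcases ((γ : ZMod 2)) with h5 | h5 <;>
  simp only [h1, h2, h3, h4, h5] <;>
  simp only [sgn_add, sgn_zero, sgn_one, mul_one, mul_zero, one_mul, zero_mul,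
    add_zero, zero_add] <;>
  ring_nf <;>
  simp [Complex.I_sq, I3aux, I4aux] <;>
  try ring_nf
end FinalScalar

/- ===== the exponent computations ===== -/
section Exponents
open Finset
variable {n : ℕ}

def aN (G : SimpleGraph (Fin n)) (v w : Fin n) (x : Fin n → Fin 2) : ℕ :=
  ∑ k ∈ Dset v w, if G.Adj v k then (x k : ℕ) else 0
def bN (G : SimpleGraph (Fin n)) (v w : Fin n) (x : Fin n → Fin 2) : ℕ :=
  ∑ k ∈ Dset v w, if G.Adj w k then (x k : ℕ) else 0
def gN (G : SimpleGraph (Fin n)) (v w : Fin n) (x : Fin n → Fin 2) : ℕ :=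
  ∑ k ∈ Dset v w, if G.Adj v k ∧ G.Adj w k then (x k : ℕ) else 0
def t0N (G : SimpleGraph (Fin n)) (v w : Fin n) (x : Fin n → Fin 2) : ℕ :=
  ∑ j ∈ Dset v w, ∑ k ∈ Dset v w, if G.Adj j k then (x j : ℕ)*(x k : ℕ) else 0

def updf (v w : Fin n) (x : Fin n → Fin 2) (a b : Fin 2) : Fin n → Fin 2 :=
  fun j => if j = v then a else if j = w then b else x j

lemma updf_v {v w : Fin n} {x a b} : updf v w x a b v = a := if_pos rfl
lemma updf_w {v w : Fin n} {x a b} (hne : v ≠ w) : updf v w x a b w = b := by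
  unfold updf; rw [if_neg hne.symm, if_pos rfl]
lemma updf_D {v w k : Fin n} {x a b} (hkv : k ≠ v) (hkw : k ≠ w) :
    updf v w x a b k = x k := by
  unfold updf; rw [if_neg hkv, if_neg hkw]

lemma TG_lemma (G : SimpleGraph (Fin n)) (v w : Fin n) (hne : v ≠ w) (hvw : G.Adj v w)
    (x : Fin n → Fin 2) :
    Complex.I ^ tN G x
    = (-1:ℂ)^((x v : ℕ)*(x w : ℕ) + (x v : ℕ)*aN G v w x + (x w : ℕ)*bN G v w x)
      * Complex.I ^ t0N G v w x := by
  rw [tN_split G x v w hne, if_pos hvw]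
  have h2 : ∑ k ∈ Dset v w, (if G.Adj v k then (x v : ℕ)*(x k : ℕ) else 0)
      = (x v : ℕ) * aN G v w x := by
    rw [aN, Finset.mul_sum]
    exact Finset.sum_congr rfl (fun k _ => by by_cases h : G.Adj v k <;> simp [h])
  have h3 : ∑ k ∈ Dset v w, (if G.Adj w k then (x w : ℕ)*(x k : ℕ) else 0)
      = (x w : ℕ) * bN G v w x := by
    rw [bN, Finset.mul_sum]
    exact Finset.sum_congr rfl (fun k _ => by by_cases h : G.Adj w k <;> simp [h])
  rw [h2, h3, pow_add, pow_mul, Complex.I_sq]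
  rfl

lemma delta_lemma (G : SimpleGraph (Fin n)) (v w : Fin n) (x : Fin n → Fin 2) :
    (-1:ℂ)^(∑ j ∈ Dset v w, if G.Adj j v ∨ G.Adj j w then (x j : ℕ) else 0)
    = (-1:ℂ)^(aN G v w x + bN G v w x + gN G v w x) := by
  have nδ : (∑ j ∈ Dset v w, if G.Adj j v ∨ G.Adj j w then (x j : ℕ) else 0) + gN G v w x
      = aN G v w x + bN G v w x := by
    rw [aN, bN, gN, ← Finset.sum_add_distrib, ← Finset.sum_add_distrib]
    refine Finset.sum_congr rfl ?_
    intro j _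
    have c1 : G.Adj j v ↔ G.Adj v j := G.adj_comm j v
    have c2 : G.Adj j w ↔ G.Adj w j := G.adj_comm j w
    by_cases h1 : G.Adj v j <;> by_cases h2 : G.Adj w j <;> simp [c1, c2, h1, h2]
  have hthis : ((-1:ℂ))^((∑ j ∈ Dset v w, if G.Adj j v ∨ G.Adj j w then (x j : ℕ) else 0) + gN G v w x)
      = ((-1:ℂ))^(aN G v w x + bN G v w x) := by rw [nδ]
  rw [pow_add] at hthis
  rw [pow_add, pow_add]
  calc (-1:ℂ)^(∑ j ∈ Dset v w, if G.Adj j v ∨ G.Adj j w then (x j : ℕ) else 0)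
      = (-1:ℂ)^(∑ j ∈ Dset v w, if G.Adj j v ∨ G.Adj j w then (x j : ℕ) else 0)
        * ((-1:ℂ)^(gN G v w x) * (-1:ℂ)^(gN G v w x)) := by
        rw [neg_one_pow_self_mul, mul_one]
    _ = ((-1:ℂ)^(∑ j ∈ Dset v w, if G.Adj j v ∨ G.Adj j w then (x j : ℕ) else 0)
        * (-1:ℂ)^(gN G v w x)) * (-1:ℂ)^(gN G v w x) := by ring
    _ = ((-1:ℂ)^(aN G v w x + bN G v w x)) * (-1:ℂ)^(gN G v w x) := by rw [hthis]
    _ = _ := by rw [pow_add]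

set_option maxHeartbeats 2000000 in
lemma TGp_lemma (G : SimpleGraph (Fin n)) (v w : Fin n) (hne : v ≠ w) (hvw : G.Adj v w)
    (x : Fin n → Fin 2) (a b : Fin 2) :
    Complex.I ^ tN (localComp (localComp (localComp G v) w) v) (updf v w x a b)
    = (-1:ℂ)^((a : ℕ)*(b : ℕ) + (a : ℕ)*bN G v w x + (b : ℕ)*aN G v w x)
      * ((-1:ℂ)^(aN G v w x * bN G v w x) * ((-1:ℂ)^(gN G v w x) * Complex.I ^ t0N G v w x)) := by
  classical
  set y := updf v w x a b with hy
  have hyv : y v = a := updf_v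
  have hyw : y w = b := updf_w hne
  have hyD : ∀ k, k ∈ Dset v w → y k = x k := by
    intro k hk
    obtain ⟨hkw, hkv⟩ := mem_Dset.1 hk
    exact updf_D hkv hkw
  rw [tN_split (localComp (localComp (localComp G v) w) v) y v w hne]
  have h1 : (if (localComp (localComp (localComp G v) w) v).Adj v w then (y v : ℕ)*(y w : ℕ) else 0) = (a : ℕ)*(b : ℕ) := by
    rw [if_pos (pivot_adj_vw G v w hvw), hyv, hyw]
  have h2 : ∑ k ∈ Dset v w, (if (localComp (localComp (localComp G v) w) v).Adj v k then (y v : ℕ)*(y k : ℕ) else 0)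
      = (a : ℕ) * bN G v w x := by
    rw [bN, Finset.mul_sum]
    refine Finset.sum_congr rfl ?_
    intro k hk
    obtain ⟨hkw, hkv⟩ := mem_Dset.1 hk
    rw [hyv, hyD k hk]
    simp only [pivot_adj_v G v w hvw k hkv hkw]
    by_cases h : G.Adj w k <;> simp [h]
  have h3 : ∑ k ∈ Dset v w, (if (localComp (localComp (localComp G v) w) v).Adj w k then (y w : ℕ)*(y k : ℕ) else 0)
      = (b : ℕ) * aN G v w x := by
    rw [aN, Finset.mul_sum]
    refine Finset.sum_congr rfl ?_
    intro k hk
    obtain ⟨hkw, hkv⟩ := mem_Dset.1 hk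
    rw [hyw, hyD k hk]
    simp only [pivot_adj_w G v w hvw k hkv hkw]
    by_cases h : G.Adj v k <;> simp [h]
  rw [h1, h2, h3, pow_add, pow_mul, Complex.I_sq]
  congr 1
  -- now the double sum over D
  set D := Dset v w with hD
  set u : Fin n → Fin n → Prop :=
    fun j k => Xor' (G.Adj v j ∧ G.Adj w k) (G.Adj w j ∧ G.Adj v k) with hu
  set m : Fin n → Fin n → ℕ := fun j k => (x j : ℕ) * (x k : ℕ) with hm
  have hT0x : ∑ j ∈ D, ∑ k ∈ D, (if (localComp (localComp (localComp G v) w) v).Adj j k then (y j : ℕ)*(y k : ℕ) else 0)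
      = ∑ j ∈ D, ∑ k ∈ D, (if (localComp (localComp (localComp G v) w) v).Adj j k then m j k else 0) := by
    refine Finset.sum_congr rfl (fun j hj => Finset.sum_congr rfl (fun k hk => ?_))
    rw [hyD j hj, hyD k hk]
  have pw : ∀ j ∈ D, ∀ k ∈ D,
      (if (localComp (localComp (localComp G v) w) v).Adj j k then m j k else 0) + 2 * (if G.Adj j k ∧ u j k then m j k else 0)
      = (if G.Adj j k then m j k else 0) + (if u j k then m j k else 0) := by
    intro j hj k hk
    obtain ⟨hjw, hjv⟩ := mem_Dset.1 hj
    obtain ⟨hkw, hkv⟩ := mem_Dset.1 hk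
    rcases eq_or_ne j k with rfl | hjk
    · have hnu : ¬ u j j := by
        simp only [hu, Xor', Xor]
        tauto
      simp [SimpleGraph.irrefl, hnu]
    · rw [show (localComp (localComp (localComp G v) w) v).Adj j k ↔ Xor' (G.Adj j k) (u j k) from
        pivot_adj_other G v w hvw j k hjv hjw hkv hkw hjk]
      by_cases hA : G.Adj j k <;> by_cases hU : u j k <;>
        simp [Xor', hA, hU] <;> omega
  have n1 : (∑ j ∈ D, ∑ k ∈ D, (if (localComp (localComp (localComp G v) w) v).Adj j k then m j k else 0))
      + 2 * (∑ j ∈ D, ∑ k ∈ D, (if G.Adj j k ∧ u j k then m j k else 0))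
      = (∑ j ∈ D, ∑ k ∈ D, (if G.Adj j k then m j k else 0))
      + (∑ j ∈ D, ∑ k ∈ D, (if u j k then m j k else 0)) := by
    rw [Finset.mul_sum, ← Finset.sum_add_distrib, ← Finset.sum_add_distrib]
    refine Finset.sum_congr rfl (fun j hj => ?_)
    rw [Finset.mul_sum, ← Finset.sum_add_distrib, ← Finset.sum_add_distrib]
    exact Finset.sum_congr rfl (fun k hk => pw j hj k hk)
  have pw2 : ∀ j ∈ D, ∀ k ∈ D,
      (if u j k then m j k else 0)
        + 2 * (if (G.Adj v j ∧ G.Adj w j) ∧ (G.Adj v k ∧ G.Adj w k) then m j k else 0)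
      = (if G.Adj v j ∧ G.Adj w k then m j k else 0)
      + (if G.Adj w j ∧ G.Adj v k then m j k else 0) := by
    intro j _ k _
    have hiff : ((G.Adj v j ∧ G.Adj w j) ∧ (G.Adj v k ∧ G.Adj w k))
        ↔ ((G.Adj v j ∧ G.Adj w k) ∧ (G.Adj w j ∧ G.Adj v k)) := by tauto
    rw [if_congr hiff rfl rfl]
    by_cases hP : G.Adj v j ∧ G.Adj w k <;> by_cases hQ : G.Adj w j ∧ G.Adj v k <;>
      simp [hu, Xor', hP, hQ] <;> omega
  have n2 : (∑ j ∈ D, ∑ k ∈ D, (if u j k then m j k else 0))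
      + 2 * (∑ j ∈ D, ∑ k ∈ D,
          (if (G.Adj v j ∧ G.Adj w j) ∧ (G.Adj v k ∧ G.Adj w k) then m j k else 0))
      = (∑ j ∈ D, ∑ k ∈ D, (if G.Adj v j ∧ G.Adj w k then m j k else 0))
      + (∑ j ∈ D, ∑ k ∈ D, (if G.Adj w j ∧ G.Adj v k then m j k else 0)) := by
    rw [Finset.mul_sum, ← Finset.sum_add_distrib, ← Finset.sum_add_distrib]
    refine Finset.sum_congr rfl (fun j hj => ?_)
    rw [Finset.mul_sum, ← Finset.sum_add_distrib, ← Finset.sum_add_distrib]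
    exact Finset.sum_congr rfl (fun k hk => pw2 j hj k hk)
  have prodsum : ∀ f g : Fin n → ℕ,
      (∑ j ∈ D, ∑ k ∈ D, f j * g k) = (∑ j ∈ D, f j) * (∑ k ∈ D, g k) :=
    fun f g => (Finset.sum_mul_sum D D f g).symm
  have hC1 : (∑ j ∈ D, ∑ k ∈ D, (if G.Adj v j ∧ G.Adj w k then m j k else 0))
      = aN G v w x * bN G v w x := by
    calc (∑ j ∈ D, ∑ k ∈ D, (if G.Adj v j ∧ G.Adj w k then m j k else 0))
        = ∑ j ∈ D, ∑ k ∈ D, ((if G.Adj v j then (x j : ℕ) else 0) * (if G.Adj w k then (x k : ℕ) else 0)) := by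
          refine Finset.sum_congr rfl (fun j _ => Finset.sum_congr rfl (fun k _ => ?_))
          by_cases hP : G.Adj v j <;> by_cases hQ : G.Adj w k <;> simp [hP, hQ, hm]
      _ = aN G v w x * bN G v w x := prodsum _ _
  have hC2 : (∑ j ∈ D, ∑ k ∈ D, (if G.Adj w j ∧ G.Adj v k then m j k else 0))
      = bN G v w x * aN G v w x := by
    calc (∑ j ∈ D, ∑ k ∈ D, (if G.Adj w j ∧ G.Adj v k then m j k else 0))
        = ∑ j ∈ D, ∑ k ∈ D, ((if G.Adj w j then (x j : ℕ) else 0) * (if G.Adj v k then (x k : ℕ) else 0)) := by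
          refine Finset.sum_congr rfl (fun j _ => Finset.sum_congr rfl (fun k _ => ?_))
          by_cases hP : G.Adj w j <;> by_cases hQ : G.Adj v k <;> simp [hP, hQ, hm]
      _ = bN G v w x * aN G v w x := prodsum _ _
  have hGam : (∑ j ∈ D, ∑ k ∈ D,
      (if (G.Adj v j ∧ G.Adj w j) ∧ (G.Adj v k ∧ G.Adj w k) then m j k else 0))
      = gN G v w x * gN G v w x := by
    calc (∑ j ∈ D, ∑ k ∈ D, (if (G.Adj v j ∧ G.Adj w j) ∧ (G.Adj v k ∧ G.Adj w k) then m j k else 0))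
        = ∑ j ∈ D, ∑ k ∈ D, ((if G.Adj v j ∧ G.Adj w j then (x j : ℕ) else 0)
            * (if G.Adj v k ∧ G.Adj w k then (x k : ℕ) else 0)) := by
          refine Finset.sum_congr rfl (fun j _ => Finset.sum_congr rfl (fun k _ => ?_))
          by_cases hP : G.Adj v j ∧ G.Adj w j <;> by_cases hQ : G.Adj v k ∧ G.Adj w k <;>
            simp [hP, hQ, hm]
      _ = gN G v w x * gN G v w x := prodsum _ _
  have hJ : Even (∑ j ∈ D, ∑ k ∈ D, (if G.Adj j k ∧ u j k then m j k else 0)) := by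
    refine even_sum_sym D _ ?_ ?_
    · intro j k
      have hiff : (G.Adj j k ∧ u j k) ↔ (G.Adj k j ∧ u k j) := by
        simp only [hu, Xor', Xor]
        have := G.adj_comm j k
        tauto
      rw [if_congr hiff rfl rfl, hm]
      simp [Nat.mul_comm]
    · intro j
      simp [SimpleGraph.irrefl]
  -- combine
  have n3 : (∑ j ∈ D, ∑ k ∈ D, (if (localComp (localComp (localComp G v) w) v).Adj j k then m j k else 0))
      + 2 * (∑ j ∈ D, ∑ k ∈ D, (if G.Adj j k ∧ u j k then m j k else 0))
      + 2 * (∑ j ∈ D, ∑ k ∈ D,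
          (if (G.Adj v j ∧ G.Adj w j) ∧ (G.Adj v k ∧ G.Adj w k) then m j k else 0))
      = t0N G v w x + 2 * (aN G v w x * bN G v w x) := by
    have ht0 : (∑ j ∈ D, ∑ k ∈ D, (if G.Adj j k then m j k else 0)) = t0N G v w x := rfl
    rw [hC1, hC2] at n2
    calc (∑ j ∈ D, ∑ k ∈ D, (if (localComp (localComp (localComp G v) w) v).Adj j k then m j k else 0))
        + 2 * (∑ j ∈ D, ∑ k ∈ D, (if G.Adj j k ∧ u j k then m j k else 0))
        + 2 * (∑ j ∈ D, ∑ k ∈ D,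
            (if (G.Adj v j ∧ G.Adj w j) ∧ (G.Adj v k ∧ G.Adj w k) then m j k else 0))
        = ((∑ j ∈ D, ∑ k ∈ D, (if G.Adj j k then m j k else 0))
            + (∑ j ∈ D, ∑ k ∈ D, (if u j k then m j k else 0)))
          + 2 * (∑ j ∈ D, ∑ k ∈ D,
            (if (G.Adj v j ∧ G.Adj w j) ∧ (G.Adj v k ∧ G.Adj w k) then m j k else 0)) := by
          rw [n1]
      _ = (∑ j ∈ D, ∑ k ∈ D, (if G.Adj j k then m j k else 0))
          + ((∑ j ∈ D, ∑ k ∈ D, (if u j k then m j k else 0))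
            + 2 * (∑ j ∈ D, ∑ k ∈ D,
              (if (G.Adj v j ∧ G.Adj w j) ∧ (G.Adj v k ∧ G.Adj w k) then m j k else 0))) := by
          ring
      _ = (∑ j ∈ D, ∑ k ∈ D, (if G.Adj j k then m j k else 0))
          + (aN G v w x * bN G v w x + bN G v w x * aN G v w x) := by rw [n2]
      _ = t0N G v w x + 2 * (aN G v w x * bN G v w x) := by rw [ht0]; ring
  have hpow : Complex.I ^ ((∑ j ∈ D, ∑ k ∈ D, (if (localComp (localComp (localComp G v) w) v).Adj j k then m j k else 0))
      + 2 * (∑ j ∈ D, ∑ k ∈ D, (if G.Adj j k ∧ u j k then m j k else 0))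
      + 2 * (∑ j ∈ D, ∑ k ∈ D,
          (if (G.Adj v j ∧ G.Adj w j) ∧ (G.Adj v k ∧ G.Adj w k) then m j k else 0)))
      = Complex.I ^ (t0N G v w x + 2 * (aN G v w x * bN G v w x)) := by rw [n3]
  simp only [pow_add, pow_mul, Complex.I_sq] at hpow
  rw [hGam] at hpow
  rw [hT0x]
  have hsq := sq_parity (gN G v w x)
  have hJ1 : ((-1:ℂ)) ^ (∑ j ∈ D, ∑ k ∈ D, (if G.Adj j k ∧ u j k then m j k else 0)) = 1 :=
    hJ.neg_one_pow
  have key : Complex.I ^ (∑ j ∈ D, ∑ k ∈ D, (if (localComp (localComp (localComp G v) w) v).Adj j k then m j k else 0))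
      * ((-1:ℂ)^(gN G v w x)) = Complex.I ^ t0N G v w x * (-1:ℂ)^(aN G v w x * bN G v w x) := by
    calc Complex.I ^ (∑ j ∈ D, ∑ k ∈ D, (if (localComp (localComp (localComp G v) w) v).Adj j k then m j k else 0))
        * ((-1:ℂ)^(gN G v w x))
        = Complex.I ^ (∑ j ∈ D, ∑ k ∈ D, (if (localComp (localComp (localComp G v) w) v).Adj j k then m j k else 0))
          * (1 * (-1:ℂ)^(gN G v w x * gN G v w x)) := by
          rw [← hsq]; ring
      _ = Complex.I ^ (∑ j ∈ D, ∑ k ∈ D, (if (localComp (localComp (localComp G v) w) v).Adj j k then m j k else 0))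
          * ((-1:ℂ)^(∑ j ∈ D, ∑ k ∈ D, (if G.Adj j k ∧ u j k then m j k else 0))
            * (-1:ℂ)^(gN G v w x * gN G v w x)) := by rw [hJ1]
      _ = Complex.I ^ t0N G v w x * (-1:ℂ)^(aN G v w x * bN G v w x) := by
          rw [← mul_assoc, hpow, ← pow_mul]
  calc Complex.I ^ (∑ j ∈ D, ∑ k ∈ D, (if (localComp (localComp (localComp G v) w) v).Adj j k then m j k else 0))
      = Complex.I ^ (∑ j ∈ D, ∑ k ∈ D, (if (localComp (localComp (localComp G v) w) v).Adj j k then m j k else 0))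
        * ((-1:ℂ)^(gN G v w x) * (-1:ℂ)^(gN G v w x)) := by
        rw [neg_one_pow_self_mul, mul_one]
    _ = (Complex.I ^ (∑ j ∈ D, ∑ k ∈ D, (if (localComp (localComp (localComp G v) w) v).Adj j k then m j k else 0))
        * (-1:ℂ)^(gN G v w x)) * (-1:ℂ)^(gN G v w x) := by ring
    _ = (Complex.I ^ t0N G v w x * (-1:ℂ)^(aN G v w x * bN G v w x)) * (-1:ℂ)^(gN G v w x) := by
        rw [key]
    _ = _ := by ring
end Exponents


/-- Local complementation along an edge on graph states: `|G⟩` equals, up to a unit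
scalar, the product of the vertex operators `U'_j` applied to `|G'⟩`, where
`G' = ((G⋆v)⋆w)⋆v`, `U'_j = R_Z·R_X⁻¹·R_Z` for `j ∈ {v,w}`, `U'_j = Z` for other `j`
adjacent in `G` to `v` or `w`, and `U'_j = I` otherwise. -/
theorem graphState_localComp_edge {n : ℕ} (G : SimpleGraph (Fin n)) (v w : Fin n)
    (hne : v ≠ w) (hvw : G.Adj v w) :
    ∃ c : ℂ, ‖c‖ = 1 ∧
      graphState G =
        c • (tensorOp fun j =>
            if j = v ∨ j = w then
              Zrot (Real.pi / 2) * (Xrot (Real.pi / 2))⁻¹ * Zrot (Real.pi / 2)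
            else if G.Adj j v ∨ G.Adj j w then PauliZ
            else 1).mulVec
          (graphState (localComp (localComp (localComp G v) w) v)) := by
  classical
  have fin2cases : ∀ t : Fin 2, t = 0 ∨ t = 1 := by decide
  refine ⟨-Complex.I, by simp, ?_⟩
  funext x
  set Af : Fin n → Matrix (Fin 2) (Fin 2) ℂ := fun j =>
    if j = v ∨ j = w then Zrot (Real.pi / 2) * (Xrot (Real.pi / 2))⁻¹ * Zrot (Real.pi / 2)
    else if G.Adj j v ∨ G.Adj j w then PauliZ else 1 with hAf
  set G' := localComp (localComp (localComp G v) w) v with hG'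
  have hgs : ∀ (H : SimpleGraph (Fin n)) (y : Fin n → Fin 2),
      graphState H y = Complex.I ^ tN H y * ((1/Real.sqrt 2 : ℝ) : ℂ)^n := by
    intro H y
    unfold graphState CZofEdges plusState
    rw [Matrix.mulVec_diagonal, prod_czPhase]
  rw [Pi.smul_apply, smul_eq_mul]
  have hmv : ((tensorOp Af).mulVec (graphState G')) x
      = ∑ y : Fin n → Fin 2, (∏ j, Af j (x j) (y j)) * graphState G' y := rfl
  have hoffdiag : ∀ j, j ≠ v → j ≠ w → ∀ s t : Fin 2, s ≠ t → Af j s t = 0 := by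
    intro j hjv hjw s t hst
    rw [hAf]
    simp only
    rw [if_neg (by tauto : ¬(j = v ∨ j = w))]
    by_cases h : G.Adj j v ∨ G.Adj j w
    · rw [if_pos h]
      fin_cases s <;> fin_cases t <;> simp_all [PauliZ]
    · rw [if_neg h]
      exact Matrix.one_apply_ne hst
  set S := (Finset.univ : Finset (Fin 2 × Fin 2)).image
    (fun ab : Fin 2 × Fin 2 => updf v w x ab.1 ab.2) with hSdef
  have hvan : ∀ y : Fin n → Fin 2, y ∉ S → (∏ j, Af j (x j) (y j)) = 0 := by
    intro y hy
    have hex : ∃ j, j ≠ v ∧ j ≠ w ∧ y j ≠ x j := by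
      by_contra hno
      push_neg at hno
      apply hy
      rw [hSdef]
      refine Finset.mem_image.2 ⟨(y v, y w), Finset.mem_univ _, ?_⟩
      funext j
      by_cases h1 : j = v
      · subst h1; exact updf_v
      · by_cases h2 : j = w
        · subst h2; exact updf_w hne
        · rw [updf_D h1 h2]
          exact (hno j h1 h2).symm
    obtain ⟨j, hjv, hjw, hyj⟩ := hex
    exact Finset.prod_eq_zero (Finset.mem_univ j) (hoffdiag j hjv hjw _ _ (Ne.symm hyj))
  have hinj : ∀ ab ∈ (Finset.univ : Finset (Fin 2 × Fin 2)), ∀ cd ∈ (Finset.univ : Finset (Fin 2 × Fin 2)),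
      (fun ab : Fin 2 × Fin 2 => updf v w x ab.1 ab.2) ab
        = (fun ab : Fin 2 × Fin 2 => updf v w x ab.1 ab.2) cd → ab = cd := by
    rintro ⟨a,b⟩ _ ⟨c,d⟩ _ h
    simp only at h
    have h1 : a = c := by
      have h0 := congrFun h v
      rw [show updf v w x a b v = a from updf_v, show updf v w x c d v = c from updf_v] at h0
      exact h0
    have h2 : b = d := by
      have h0 := congrFun h w
      rw [show updf v w x a b w = b from updf_w hne, show updf v w x c d w = d from updf_w hne] at h0
      exact h0
    simp [h1, h2]
  have hsum : (∑ y : Fin n → Fin 2, (∏ j, Af j (x j) (y j)) * graphState G' y)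
      = ∑ ab : Fin 2 × Fin 2,
          (∏ j, Af j (x j) (updf v w x ab.1 ab.2 j)) * graphState G' (updf v w x ab.1 ab.2) := by
    rw [← Finset.sum_subset (Finset.subset_univ S)
      (fun y _ hy => by rw [hvan y hy, zero_mul])]
    rw [hSdef, Finset.sum_image hinj]
  have hterm : ∀ a b : Fin 2,
      (∏ j, Af j (x j) (updf v w x a b j)) * graphState G' (updf v w x a b)
      = (((1 - Complex.I)/2) • !![(1:ℂ),-1;-1,-1]) (x v) a *
        ((((1 - Complex.I)/2) • !![(1:ℂ),-1;-1,-1]) (x w) b *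
         ((-1:ℂ)^(aN G v w x + bN G v w x + gN G v w x) *
          ((-1:ℂ)^((a:ℕ)*(b:ℕ) + (a:ℕ)*bN G v w x + (b:ℕ)*aN G v w x) *
           ((-1:ℂ)^(aN G v w x * bN G v w x) * ((-1:ℂ)^(gN G v w x) *
            (Complex.I ^ t0N G v w x * ((1/Real.sqrt 2 : ℝ):ℂ)^n)))))) := by
    intro a b
    rw [hgs, hG', TGp_lemma G v w hne hvw x a b]
    rw [prod_split hne (f := fun j => Af j (x j) (updf v w x a b j))]
    rw [show updf v w x a b v = a from updf_v, show updf v w x a b w = b from updf_w hne]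
    have hAv : Af v = Zrot (Real.pi/2) * (Xrot (Real.pi/2))⁻¹ * Zrot (Real.pi/2) := by
      rw [hAf]; simp
    have hAw : Af w = Zrot (Real.pi/2) * (Xrot (Real.pi/2))⁻¹ * Zrot (Real.pi/2) := by
      rw [hAf]; simp
    have hrest : ∏ j ∈ Dset v w, Af j (x j) (updf v w x a b j)
        = (-1:ℂ)^(∑ j ∈ Dset v w, if G.Adj j v ∨ G.Adj j w then (x j : ℕ) else 0) := by
      rw [← Finset.prod_pow_eq_pow_sum]
      refine Finset.prod_congr rfl ?_
      intro j hj
      obtain ⟨hjw, hjv⟩ := mem_Dset.1 hj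
      rw [updf_D hjv hjw, hAf]
      simp only
      rw [if_neg (by tauto : ¬(j = v ∨ j = w))]
      by_cases h : G.Adj j v ∨ G.Adj j w
      · rw [if_pos h, if_pos h]
        rcases fin2cases (x j) with h0 | h0 <;> rw [h0] <;> simp [PauliZ]
      · rw [if_neg h, if_neg h, Matrix.one_apply_eq, pow_zero]
    rw [hAv, hAw, Umat, hrest, delta_lemma]
    ring
  rw [hmv, hsum]
  rw [Fintype.sum_prod_type]
  simp only [hterm]
  rw [final_lemma (x v) (x w) (aN G v w x) (bN G v w x) (gN G v w x)
    (Complex.I ^ t0N G v w x * ((1/Real.sqrt 2 : ℝ):ℂ)^n)]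
  rw [hgs G x, TG_lemma G v w hne hvw x]
  rw [← mul_assoc, show (-Complex.I) * Complex.I = 1 by simp [Complex.I_mul_I], one_mul]
  ring
end
end

section
/- The two members of a simplified pair of rGS-LC data represent the same quantum state if and only if they are identical: for a simplified pair of rGS-LC data (G¹, A), (G², B) on n qubits, there exists a complex unit scalar c with |G¹; A⟩ = c · |G²; B⟩ if and only if G¹ = G² and A_v = B_v for every vertex v. -/
open scoped Matrix BigOperators
open scoped Classical

noncomputable section

namespace RGSLCAux

open Finset

/-! ### Scalar and matrix computations -/

lemma sqrt2C_sq : (((Real.sqrt 2 : ℝ)) : ℂ)^2 = 2 := by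
  rw [← Complex.ofReal_pow, Real.sq_sqrt] <;> norm_num

lemma hinv2 : ((((Real.sqrt 2 : ℝ)) : ℂ))⁻¹ * ((((Real.sqrt 2 : ℝ)) : ℂ))⁻¹ = 1/2 := by
  rw [← mul_inv, ← sq, sqrt2C_sq]; norm_num

lemma exp_pi_div_two : Complex.exp ((Real.pi/2 : ℝ) * Complex.I) = Complex.I := by
  rw [Complex.exp_mul_I, ← Complex.ofReal_cos, ← Complex.ofReal_sin,
    Real.cos_pi_div_two, Real.sin_pi_div_two]; simp

lemma exp_3pi_div_two : Complex.exp ((3*Real.pi/2 : ℝ) * Complex.I) = -Complex.I := by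
  have h : ((3*Real.pi/2 : ℝ) : ℂ) * Complex.I
      = (Real.pi : ℝ) * Complex.I + ((Real.pi/2:ℝ):ℂ) * Complex.I := by
    push_cast; ring
  rw [h, Complex.exp_add, Complex.exp_pi_mul_I, exp_pi_div_two]; simp

/-- The red-node operator `X_{π/2} Z_{π/2}`. -/
def MP : Matrix (Fin 2) (Fin 2) ℂ := Xrot (Real.pi / 2) * Zrot (Real.pi / 2)

/-- The red-node operator `X_{π/2} Z_{3π/2}`. -/
def MM : Matrix (Fin 2) (Fin 2) ℂ := Xrot (Real.pi / 2) * Zrot (3 * Real.pi / 2)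

lemma hasRedNode_iff (M : Matrix (Fin 2) (Fin 2) ℂ) : hasRedNode M ↔ (M = MP ∨ M = MM) :=
  Iff.rfl

set_option maxHeartbeats 1000000 in
lemma MP_eq : MP = !![(1+Complex.I)/2, (1+Complex.I)/2; (1-Complex.I)/2, (-1+Complex.I)/2] := by
  unfold MP Xrot Hmat Zrot
  rw [exp_pi_div_two]
  ext i j
  fin_cases i <;> fin_cases j <;>
    ( simp [Matrix.mul_apply, Fin.sum_univ_two]
      first
        | linear_combination (1+Complex.I)*hinv2 | linear_combination (1-Complex.I)*hinv2
        | linear_combination (-1+Complex.I)*hinv2 | linear_combination (-1-Complex.I)*hinv2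
        | linear_combination (Complex.I-Complex.I^2)*hinv2 - (1/2)*Complex.I_sq
        | linear_combination (Complex.I+Complex.I^2)*hinv2 + (1/2)*Complex.I_sq
        | linear_combination (-Complex.I+Complex.I^2)*hinv2 + (1/2)*Complex.I_sq
        | linear_combination (-Complex.I-Complex.I^2)*hinv2 - (1/2)*Complex.I_sq )

set_option maxHeartbeats 1000000 in
lemma MM_eq : MM = !![(1+Complex.I)/2, (-1-Complex.I)/2; (1-Complex.I)/2, (1-Complex.I)/2] := by
  unfold MM Xrot Hmat Zrot
  rw [exp_pi_div_two, exp_3pi_div_two]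
  ext i j
  fin_cases i <;> fin_cases j <;>
    ( simp [Matrix.mul_apply, Fin.sum_univ_two]
      first
        | linear_combination (1+Complex.I)*hinv2 | linear_combination (1-Complex.I)*hinv2
        | linear_combination (-1+Complex.I)*hinv2 | linear_combination (-1-Complex.I)*hinv2
        | linear_combination (Complex.I-Complex.I^2)*hinv2 - (1/2)*Complex.I_sq
        | linear_combination (Complex.I+Complex.I^2)*hinv2 + (1/2)*Complex.I_sq
        | linear_combination (-Complex.I+Complex.I^2)*hinv2 + (1/2)*Complex.I_sq
        | linear_combination (-Complex.I-Complex.I^2)*hinv2 - (1/2)*Complex.I_sq )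

lemma one_add_I_ne : (1 + Complex.I) ≠ 0 := by
  intro h
  have := congrArg Complex.im h
  simp at this

lemma one_sub_I_ne : (1 - Complex.I) ≠ 0 := by
  intro h
  have := congrArg Complex.im h
  simp at this

lemma neg_one_add_I_ne : (-1 + Complex.I) ≠ 0 := by
  intro h
  have := congrArg Complex.re h
  simp at this

lemma MP_ne_MM : MP ≠ MM := by
  rw [MP_eq, MM_eq]
  intro h
  have h2 := congrFun (congrFun h 0) 1
  simp at h2
  have : (1 + Complex.I) = 0 := by linear_combination h2/2
  exact one_add_I_ne this

lemma Zrot_00 (θ : ℝ) : Zrot θ 0 0 = 1 := rfl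
lemma Zrot_01 (θ : ℝ) : Zrot θ 0 1 = 0 := rfl
lemma Zrot_10 (θ : ℝ) : Zrot θ 1 0 = 0 := rfl
lemma Zrot_11 (θ : ℝ) : Zrot θ 1 1 = Complex.exp (θ * Complex.I) := rfl

lemma Zrot_offdiag (θ : ℝ) (a b : Fin 2) (h : a ≠ b) : Zrot θ a b = 0 := by
  fin_cases a <;> fin_cases b <;> first | rfl | (exact absurd rfl h)

lemma Zrot_diag_ne (θ : ℝ) (a : Fin 2) : Zrot θ a a ≠ 0 := by
  fin_cases a
  · exact one_ne_zero
  · exact Complex.exp_ne_zero _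

/-- A non-red element of `Rset` is a `Zrot`. -/
lemma nonred_Zrot {M : Matrix (Fin 2) (Fin 2) ℂ} (hR : M ∈ Rset) (h : ¬ hasRedNode M) :
    ∃ θ : ℝ, M = Zrot θ := by
  rcases hR with ⟨k, hk⟩ | hP | hM
  · exact ⟨_, hk⟩
  · exact absurd (Or.inl hP) h
  · exact absurd (Or.inr hM) h

end RGSLCAux
namespace RGSLCAux

open Finset

variable {n : ℕ}

/-- The total `CZ` phase of a bit string. -/
def Dfun (G : SimpleGraph (Fin n)) (x : Fin n → Fin 2) : ℂ :=
  ∏ e ∈ G.edgeFinset, czPhase e x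

/-- The number of neighbours of `v` at which `x` is `1` (counted with values). -/
def Lp (G : SimpleGraph (Fin n)) (v : Fin n) (x : Fin n → Fin 2) : ℕ :=
  ∑ w ∈ G.neighborFinset v, (x w : ℕ)

lemma czPhase_mk (u v : Fin n) (x : Fin n → Fin 2) :
    czPhase s(u, v) x = (-1 : ℂ) ^ ((x u : ℕ) * (x v : ℕ)) := rfl

lemma czPhase_ne_zero (e : Sym2 (Fin n)) (x : Fin n → Fin 2) : czPhase e x ≠ 0 := by
  induction e using Sym2.ind with
  | _ u v =>
    rw [czPhase_mk]
    exact pow_ne_zero _ (by norm_num)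

lemma Dfun_ne_zero (G : SimpleGraph (Fin n)) (x : Fin n → Fin 2) : Dfun G x ≠ 0 :=
  Finset.prod_ne_zero_iff.mpr fun e _ => czPhase_ne_zero e x

/-- The per-edge correction factor for an update of qubit `j`, with multiplier `m`. -/
def gfun (j : Fin n) (m : ℕ) (x : Fin n → Fin 2) : Sym2 (Fin n) → ℂ :=
  Sym2.lift ⟨fun a b => (-1 : ℂ) ^
      ((if j = a then m * (x b : ℕ) else 0) + (if j = b then m * (x a : ℕ) else 0)),
    fun a b => by dsimp only; rw [add_comm]⟩

lemma gfun_mk (j : Fin n) (m : ℕ) (x : Fin n → Fin 2) (a b : Fin n) :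
    gfun j m x s(a, b) = (-1 : ℂ) ^
      ((if j = a then m * (x b : ℕ) else 0) + (if j = b then m * (x a : ℕ) else 0)) := rfl

lemma czPhase_update {G : SimpleGraph (Fin n)} {e : Sym2 (Fin n)} (he : e ∈ G.edgeFinset)
    (x : Fin n → Fin 2) (j : Fin n) (c : Fin 2) :
    czPhase e (Function.update x j c) = czPhase e x * gfun j ((c : ℕ) + (x j : ℕ)) x e := by
  induction e using Sym2.ind with
  | _ a b =>
    have hadj : G.Adj a b := (SimpleGraph.mem_edgeFinset.mp he)
    have hab : a ≠ b := hadj.ne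
    rw [czPhase_mk, czPhase_mk, gfun_mk]
    by_cases hja : j = a
    · subst hja
      rw [if_pos rfl, if_neg hab]
      rw [Function.update_self, Function.update_of_ne (Ne.symm hab)]
      rw [← pow_add]
      have hexp : (x j : ℕ) * (x b : ℕ) + (((c:ℕ) + (x j : ℕ)) * (x b : ℕ) + 0)
          = (c:ℕ) * (x b : ℕ) + 2 * ((x j : ℕ) * (x b : ℕ)) := by ring
      rw [hexp, pow_add, pow_mul]
      norm_num
    · by_cases hjb : j = b
      · subst hjb
        rw [if_neg hja, if_pos rfl]
        rw [Function.update_self, Function.update_of_ne (fun h => hja h.symm)]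
        rw [← pow_add]
        have hexp : (x a : ℕ) * (x j : ℕ) + (0 + ((c:ℕ) + (x j : ℕ)) * (x a : ℕ))
            = (x a : ℕ) * (c:ℕ) + 2 * ((x a : ℕ) * (x j : ℕ)) := by ring
        rw [hexp, pow_add, pow_mul]
        norm_num
      · rw [if_neg hja, if_neg hjb]
        rw [Function.update_of_ne (fun h => hja h.symm), Function.update_of_ne (fun h => hjb h.symm)]
        simp

lemma gfun_prod (G : SimpleGraph (Fin n)) (j : Fin n) (m : ℕ) (x : Fin n → Fin 2) :
    ∏ e ∈ G.edgeFinset, gfun j m x e = (-1 : ℂ) ^ (m * Lp G j x) := by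
  rw [← Finset.prod_filter_mul_prod_filter_not G.edgeFinset (fun e => j ∈ e)]
  have h2 : ∏ e ∈ G.edgeFinset.filter (fun e => ¬ j ∈ e), gfun j m x e = 1 := by
    apply Finset.prod_eq_one
    intro e he
    rw [Finset.mem_filter] at he
    obtain ⟨he1, he2⟩ := he
    induction e using Sym2.ind with
    | _ a b =>
      rw [Sym2.mem_iff] at he2
      push_neg at he2
      rw [gfun_mk, if_neg he2.1, if_neg he2.2]
      norm_num
  rw [h2, mul_one]
  have h1 : ∏ e ∈ G.edgeFinset.filter (fun e => j ∈ e), gfun j m x e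
      = ∏ w ∈ G.neighborFinset j, (-1 : ℂ) ^ (m * (x w : ℕ)) := by
    refine (Finset.prod_bij (fun w _ => s(j, w)) ?_ ?_ ?_ ?_).symm
    · intro w hw
      rw [SimpleGraph.mem_neighborFinset] at hw
      rw [Finset.mem_filter, SimpleGraph.mem_edgeFinset]
      exact ⟨hw, Sym2.mem_mk_left j w⟩
    · intro w1 h1 w2 h2 heq
      rw [SimpleGraph.mem_neighborFinset] at h1 h2
      have := Sym2.congr_right.mp heq
      exact this
    · intro e he
      rw [Finset.mem_filter, SimpleGraph.mem_edgeFinset] at he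
      obtain ⟨hadj, hmem⟩ := he
      induction e using Sym2.ind with
      | _ a b =>
        rw [Sym2.mem_iff] at hmem
        rcases hmem with rfl | rfl
        · exact ⟨b, by rw [SimpleGraph.mem_neighborFinset]; exact hadj, rfl⟩
        · exact ⟨a, by rw [SimpleGraph.mem_neighborFinset]; exact (SimpleGraph.adj_symm _ hadj),
            Sym2.eq_swap⟩
    · intro w hw
      rw [SimpleGraph.mem_neighborFinset] at hw
      rw [gfun_mk, if_pos rfl, if_neg (fun h => hw.ne h)]
      rw [add_zero]
  rw [h1, Finset.prod_pow_eq_pow_sum, ← Finset.mul_sum]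
  rfl

lemma Dfun_update (G : SimpleGraph (Fin n)) (x : Fin n → Fin 2) (j : Fin n) (c : Fin 2) :
    Dfun G (Function.update x j c)
      = Dfun G x * (-1 : ℂ) ^ (((c : ℕ) + (x j : ℕ)) * Lp G j x) := by
  unfold Dfun
  rw [← gfun_prod G j _ x, ← Finset.prod_mul_distrib]
  exact Finset.prod_congr rfl fun e he => czPhase_update he x j c

lemma Lp_congr (G : SimpleGraph (Fin n)) (v : Fin n) {x y : Fin n → Fin 2}
    (h : ∀ w, G.Adj v w → x w = y w) : Lp G v x = Lp G v y := by
  unfold Lp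
  exact Finset.sum_congr rfl fun w hw => by
    rw [h w ((SimpleGraph.mem_neighborFinset _ _ _).mp hw)]

end RGSLCAux
namespace RGSLCAux

open Finset

variable {n : ℕ}

lemma Dfun_multi (G : SimpleGraph (Fin n)) (x : Fin n → Fin 2) (T : Finset (Fin n))
    (hT : ∀ v ∈ T, ∀ w ∈ T, ¬ G.Adj v w) :
    ∀ y : Fin n → Fin 2, (∀ j, j ∉ T → y j = x j) →
      Dfun G y = Dfun G x * ∏ v ∈ T, (-1 : ℂ) ^ (((y v : ℕ) + (x v : ℕ)) * Lp G v x) := by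
  induction T using Finset.induction_on with
  | empty =>
    intro y hy
    have : y = x := funext fun j => hy j (Finset.notMem_empty j)
    rw [this, Finset.prod_empty, mul_one]
  | @insert a s ha ih =>
    intro y hy
    have hT' : ∀ v ∈ s, ∀ w ∈ s, ¬ G.Adj v w :=
      fun v hv w hw => hT v (Finset.mem_insert_of_mem hv) w (Finset.mem_insert_of_mem hw)
    set y' := Function.update y a (x a) with hy'def
    have hy' : ∀ j, j ∉ s → y' j = x j := by
      intro j hj
      rw [hy'def]
      by_cases hja : j = a
      · subst hja; rw [Function.update_self]
      · rw [Function.update_of_ne hja]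
        exact hy j (by simp [hja, hj])
    have ihy' := ih hT' y' hy'
    have hyy' : y = Function.update y' a (y a) := by
      funext j
      by_cases hja : j = a
      · subst hja; rw [Function.update_self]
      · rw [Function.update_of_ne hja, hy'def, Function.update_of_ne hja]
    have hLp : Lp G a y' = Lp G a x := by
      apply Lp_congr
      intro w hw
      have hwa : w ≠ a := fun h => (G.irrefl (h ▸ hw))
      rw [hy'def, Function.update_of_ne hwa]
      by_cases hws : w ∈ s
      · exact absurd hw (hT a (Finset.mem_insert_self a s) w (Finset.mem_insert_of_mem hws))
      · exact hy w (by simp [hwa, hws])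
    calc Dfun G y = Dfun G (Function.update y' a (y a)) := by rw [← hyy']
      _ = Dfun G y' * (-1:ℂ) ^ (((y a : ℕ) + (y' a : ℕ)) * Lp G a y') := Dfun_update G y' a (y a)
      _ = Dfun G x * (∏ v ∈ s, (-1 : ℂ) ^ (((y' v : ℕ) + (x v : ℕ)) * Lp G v x))
            * (-1:ℂ) ^ (((y a : ℕ) + (x a : ℕ)) * Lp G a x) := by
          rw [ihy', hLp, hy'def, Function.update_self]
      _ = Dfun G x * ∏ v ∈ insert a s, (-1 : ℂ) ^ (((y v : ℕ) + (x v : ℕ)) * Lp G v x) := by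
          rw [Finset.prod_insert ha]
          have : ∀ v ∈ s, ((y' v : ℕ) + (x v : ℕ)) = ((y v : ℕ) + (x v : ℕ)) := by
            intro v hv
            rw [hy'def, Function.update_of_ne (fun h => ha (by rw [← h]; exact hv))]
          rw [Finset.prod_congr rfl (fun v hv => by rw [this v hv])]
          ring

lemma czPhase_eq_ite {G : SimpleGraph (Fin n)} {e : Sym2 (Fin n)} (he : e ∈ G.edgeFinset)
    (x : Fin n → Fin 2) :
    czPhase e x = if (∀ w ∈ e, x w = 1) then (-1 : ℂ) else 1 := by
  induction e using Sym2.ind with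
  | _ a b =>
    rw [czPhase_mk]
    have hcond : (∀ w ∈ s(a,b), x w = 1) ↔ (x a = 1 ∧ x b = 1) := by
      constructor
      · intro h; exact ⟨h a (Sym2.mem_mk_left a b), h b (Sym2.mem_mk_right a b)⟩
      · rintro ⟨h1, h2⟩ w hw
        rcases Sym2.mem_iff.mp hw with rfl | rfl
        · exact h1
        · exact h2
    by_cases h : x a = 1 ∧ x b = 1
    · rw [if_pos (hcond.mpr h), h.1, h.2]
      norm_num
    · rw [if_neg (fun hh => h (hcond.mp hh))]
      have : (x a : ℕ) * (x b : ℕ) = 0 := by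
        rcases not_and_or.mp h with h1 | h1
        · have : x a = 0 := by omega
          rw [this]; simp
        · have : x b = 0 := by omega
          rw [this]; simp
      rw [this, pow_zero]

/-- `Dfun` as a parity of the count of edges whose both endpoints carry `1`. -/
lemma Dfun_eq_card (G : SimpleGraph (Fin n)) (x : Fin n → Fin 2) :
    Dfun G x = (-1 : ℂ) ^ (G.edgeFinset.filter (fun e => ∀ w ∈ e, x w = 1)).card := by
  unfold Dfun
  rw [Finset.prod_congr rfl (fun e he => czPhase_eq_ite he x)]
  rw [Finset.prod_ite, Finset.prod_const, Finset.prod_const, one_pow, mul_one]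

lemma Lp_delta (G : SimpleGraph (Fin n)) (v j : Fin n) :
    Lp G v (fun w => if w = j then 1 else 0) = if G.Adj v j then 1 else 0 := by
  unfold Lp
  have : ∀ w ∈ G.neighborFinset v, (((if w = j then (1:Fin 2) else 0) : Fin 2) : ℕ)
      = if w = j then 1 else 0 := by
    intro w _
    split <;> rfl
  rw [Finset.sum_congr rfl this, Finset.sum_ite_eq' (G.neighborFinset v) j (fun _ => 1)]
  simp [SimpleGraph.mem_neighborFinset]

lemma Lp_zero (G : SimpleGraph (Fin n)) (v : Fin n) :
    Lp G v (fun _ => 0) = 0 := by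
  unfold Lp
  simp

end RGSLCAux
namespace RGSLCAux

open Finset

variable {n : ℕ}

/-- The red-vertex factor in the amplitude formula. -/
def gred (G : SimpleGraph (Fin n)) (A : Fin n → Matrix (Fin 2) (Fin 2) ℂ)
    (v : Fin n) (x : Fin n → Fin 2) : ℂ :=
  ∑ b : Fin 2, A v (x v) b * (-1 : ℂ) ^ (((b : ℕ) + (x v : ℕ)) * Lp G v x)

lemma state_formula (G : SimpleGraph (Fin n)) (A : Fin n → Matrix (Fin 2) (Fin 2) ℂ)
    (hA : IsRGSLC G A) (x : Fin n → Fin 2) :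
    rgslcState G A x = ((1 / Real.sqrt 2 : ℝ) : ℂ) ^ n * (Dfun G x *
      ((∏ v ∈ univ.filter (fun v => ¬ hasRedNode (A v)), A v (x v) (x v)) *
        ∏ v ∈ univ.filter (fun v => hasRedNode (A v)), gred G A v x)) := by
  classical
  set P : Fin n → Prop := fun v => hasRedNode (A v) with hP
  -- expand the state as a sum
  have hexp : rgslcState G A x
      = ∑ y : Fin n → Fin 2, (∏ j, A j (x j) (y j)) * (Dfun G y * ((1 / Real.sqrt 2 : ℝ) : ℂ) ^ n) := by
    unfold rgslcState graphState tensorOp CZofEdges plusState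
    rw [Matrix.mulVec]
    unfold dotProduct
    apply Finset.sum_congr rfl
    intro y _
    rw [Matrix.mulVec_diagonal]
    rfl
  rw [hexp]
  -- reindex by the equivalence splitting red and non-red coordinates
  set e := (Equiv.piEquivPiSubtypeProd P (fun _ => Fin 2)).symm with he
  rw [← Equiv.sum_comp e (fun y => (∏ j, A j (x j) (y j)) * (Dfun G y * ((1 / Real.sqrt 2 : ℝ) : ℂ) ^ n))]
  rw [Fintype.sum_prod_type]
  -- the inner sums over non-red coordinates collapse
  have hinner : ∀ a : (∀ v : {v // P v}, Fin 2),
      ∑ b : (∀ v : {v // ¬ P v}, Fin 2),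
        (∏ j, A j (x j) (e (a, b) j)) * (Dfun G (e (a, b)) * ((1 / Real.sqrt 2 : ℝ) : ℂ) ^ n)
      = (∏ j, A j (x j) (e (a, fun v => x v.1) j)) *
          (Dfun G (e (a, fun v => x v.1)) * ((1 / Real.sqrt 2 : ℝ) : ℂ) ^ n) := by
    intro a
    apply Finset.sum_eq_single (fun v : {v // ¬ P v} => x v.1)
    · intro b _ hb
      have : ∃ v : {v // ¬ P v}, b v ≠ x v.1 := by
        by_contra hcon
        push_neg at hcon
        exact hb (funext hcon)
      obtain ⟨v, hv⟩ := this
      have hev : e (a, b) v.1 = b v := by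
        rw [he, Equiv.piEquivPiSubtypeProd_symm_apply, dif_neg v.2]
      have hzero : A v.1 (x v.1) (e (a, b) v.1) = 0 := by
        obtain ⟨θ, hθ⟩ := nonred_Zrot (hA.1 v.1) v.2
        rw [hθ, hev]
        exact Zrot_offdiag θ _ _ (Ne.symm hv)
      rw [Finset.prod_eq_zero (Finset.mem_univ v.1) hzero, zero_mul]
    · intro h
      exact absurd (Finset.mem_univ _) h
  rw [Finset.sum_congr rfl (fun a _ => hinner a)]
  -- now evaluate the summand
  have hY : ∀ (a : (∀ v : {v // P v}, Fin 2)) (j : Fin n),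
      e (a, fun v : {v // ¬ P v} => x v.1) j = if h : P j then a ⟨j, h⟩ else x j := by
    intro a j
    rw [he, Equiv.piEquivPiSubtypeProd_symm_apply]
  have hsummand : ∀ a : (∀ v : {v // P v}, Fin 2),
      (∏ j, A j (x j) (e (a, fun v => x v.1) j)) *
          (Dfun G (e (a, fun v => x v.1)) * ((1 / Real.sqrt 2 : ℝ) : ℂ) ^ n)
      = ((1 / Real.sqrt 2 : ℝ) : ℂ) ^ n * (Dfun G x *
          ((∏ v ∈ univ.filter (fun v => ¬ P v), A v (x v) (x v)) *
            ∏ v : {v // P v}, (A v.1 (x v.1) (a v) *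
              (-1 : ℂ) ^ ((((a v) : ℕ) + (x v.1 : ℕ)) * Lp G v.1 x)))) := by
    intro a
    set Y : Fin n → Fin 2 := e (a, fun v : {v // ¬ P v} => x v.1) with hYdef
    have hYred : ∀ (v : Fin n) (h : P v), Y v = a ⟨v, h⟩ := by
      intro v h; rw [hYdef, hY, dif_pos h]
    have hYnon : ∀ (v : Fin n), ¬ P v → Y v = x v := by
      intro v h; rw [hYdef, hY, dif_neg h]
    -- split the entry product
    have hsplit : (∏ j, A j (x j) (Y j))
        = (∏ v ∈ univ.filter (fun v => P v), A v (x v) (Y v)) *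
          ∏ v ∈ univ.filter (fun v => ¬ P v), A v (x v) (x v) := by
      rw [← Finset.prod_filter_mul_prod_filter_not univ P]
      congr 1
      exact Finset.prod_congr rfl (fun v hv => by
        rw [hYnon v (Finset.mem_filter.mp hv).2])
    -- compute Dfun of Y
    have hD : Dfun G Y = Dfun G x *
        ∏ v ∈ univ.filter (fun v => P v), (-1 : ℂ) ^ (((Y v : ℕ) + (x v : ℕ)) * Lp G v x) := by
      apply Dfun_multi G x _ ?hT Y ?hagree
      case hT =>
        intro v hv w hw hadj
        exact hA.2 v w hadj ⟨(Finset.mem_filter.mp hv).2, (Finset.mem_filter.mp hw).2⟩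
      case hagree =>
        intro j hj
        exact hYnon j (by simpa using hj)
    rw [hsplit, hD]
    have hsub1 : ∏ v ∈ univ.filter (fun v => P v), A v (x v) (Y v)
        = ∏ v : {v // P v}, A v.1 (x v.1) (a v) := by
      rw [Finset.prod_subtype (p := P) (univ.filter (fun v => P v)) (fun v => by simp)
        (fun v => A v (x v) (Y v))]
      exact Finset.prod_congr rfl (fun v _ => by rw [hYred v.1 v.2])
    have hsub2 : ∏ v ∈ univ.filter (fun v => P v), (-1 : ℂ) ^ (((Y v : ℕ) + (x v : ℕ)) * Lp G v x)
        = ∏ v : {v // P v}, (-1 : ℂ) ^ ((((a v) : ℕ) + (x v.1 : ℕ)) * Lp G v.1 x) := by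
      rw [Finset.prod_subtype (p := P) (univ.filter (fun v => P v)) (fun v => by simp)
        (fun v => (-1 : ℂ) ^ (((Y v : ℕ) + (x v : ℕ)) * Lp G v x))]
      exact Finset.prod_congr rfl (fun v _ => by rw [hYred v.1 v.2])
    rw [hsub1, hsub2, Finset.prod_mul_distrib]
    ring
  rw [Finset.sum_congr rfl (fun a _ => hsummand a)]
  rw [← Finset.mul_sum, ← Finset.mul_sum, ← Finset.mul_sum]
  -- interchange sum and product
  have hswap : ∑ a : (∀ v : {v // P v}, Fin 2),
      ∏ v : {v // P v}, (A v.1 (x v.1) (a v) *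
        (-1 : ℂ) ^ ((((a v) : ℕ) + (x v.1 : ℕ)) * Lp G v.1 x))
      = ∏ v : {v // P v}, gred G A v.1 x := by
    rw [← Fintype.piFinset_univ, ← Finset.prod_univ_sum (fun _ => (univ : Finset (Fin 2)))
      (fun (v : {v // P v}) (b : Fin 2) =>
        A v.1 (x v.1) b * (-1:ℂ)^(((b:ℕ)+(x v.1:ℕ)) * Lp G v.1 x))]
    rfl
  have hswap2 : (∏ v : {v // P v}, gred G A v.1 x)
      = ∏ v ∈ univ.filter (fun v => P v), gred G A v x :=
    (Finset.prod_subtype (p := P) (univ.filter (fun v => P v)) (fun v => by simp)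
      (fun v => gred G A v x)).symm
  rw [hswap, hswap2]

end RGSLCAux
namespace RGSLCAux

open Finset

variable {n : ℕ}

lemma fin2_eq (a : Fin 2) : a = 0 ∨ a = 1 := by
  fin_cases a
  · exact Or.inl rfl
  · exact Or.inr rfl

/-- The "sign" of a red vertex operator. -/
def sigN (M : Matrix (Fin 2) (Fin 2) ℂ) : ℕ := if M = MM then 1 else 0

set_option maxHeartbeats 1000000 in
lemma gred_red_iff (G : SimpleGraph (Fin n)) (A : Fin n → Matrix (Fin 2) (Fin 2) ℂ)
    (v : Fin n) (x : Fin n → Fin 2) (h : hasRedNode (A v)) :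
    gred G A v x ≠ 0 ↔ (Lp G v x + (x v : ℕ) + sigN (A v)) % 2 = 0 := by
  have hsum : gred G A v x = A v (x v) 0 * (-1 : ℂ) ^ (((0:ℕ) + (x v : ℕ)) * Lp G v x)
      + A v (x v) 1 * (-1 : ℂ) ^ (((1:ℕ) + (x v : ℕ)) * Lp G v x) := by
    unfold gred
    rw [Fin.sum_univ_two]
    rfl
  have hMMne : ∀ _h2 : A v = MP, sigN (A v) = 0 :=
    fun h2 => by unfold sigN; rw [if_neg (by rw [h2]; exact MP_ne_MM)]
  have hMMyes : ∀ _h2 : A v = MM, sigN (A v) = 1 := fun h2 => by unfold sigN; rw [if_pos h2]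
  rcases Nat.even_or_odd (Lp G v x) with hev | hod
  · have hL : (-1 : ℂ) ^ (Lp G v x) = 1 := hev.neg_one_pow
    have hLmod : Lp G v x % 2 = 0 := Nat.even_iff.mp hev
    rcases h with hp | hm
    · replace hp : A v = MP := hp
      rcases fin2_eq (x v) with h0 | h1 <;>
        [rw [hsum, hMMne hp, hp, MP_eq, h0]; rw [hsum, hMMne hp, hp, MP_eq, h1]] <;>
        norm_num [hL, hLmod] <;>
        first
          | omega
          | (intro hc; exact one_add_I_ne (by linear_combination hc))
          | (intro hc; exact one_sub_I_ne (by linear_combination hc))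
          | (intro hc; exact neg_one_add_I_ne (by linear_combination hc))
          | (constructor
             · intro hc; exact absurd (by ring) hc
             · intro hcond; exact absurd hcond (by omega))
          | (constructor
             · intro _; omega
             · intro _ hc
               first
                 | exact one_add_I_ne (by linear_combination hc)
                 | exact one_sub_I_ne (by linear_combination hc)
                 | exact neg_one_add_I_ne (by linear_combination hc))
    · replace hm : A v = MM := hm
      rcases fin2_eq (x v) with h0 | h1 <;>
        [rw [hsum, hMMyes hm, hm, MM_eq, h0]; rw [hsum, hMMyes hm, hm, MM_eq, h1]] <;>
        norm_num [hL, hLmod] <;>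
        first
          | omega
          | (intro hc; exact one_add_I_ne (by linear_combination hc))
          | (intro hc; exact one_sub_I_ne (by linear_combination hc))
          | (intro hc; exact neg_one_add_I_ne (by linear_combination hc))
          | (constructor
             · intro hc; exact absurd (by ring) hc
             · intro hcond; exact absurd hcond (by omega))
          | (constructor
             · intro _; omega
             · intro _ hc
               first
                 | exact one_add_I_ne (by linear_combination hc)
                 | exact one_sub_I_ne (by linear_combination hc)
                 | exact neg_one_add_I_ne (by linear_combination hc))
  · have hL : (-1 : ℂ) ^ (Lp G v x) = -1 := hod.neg_one_pow
    have hLmod : Lp G v x % 2 = 1 := Nat.odd_iff.mp hod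
    rcases h with hp | hm
    · replace hp : A v = MP := hp
      rcases fin2_eq (x v) with h0 | h1 <;>
        [rw [hsum, hMMne hp, hp, MP_eq, h0]; rw [hsum, hMMne hp, hp, MP_eq, h1]] <;>
        norm_num [hL, hLmod] <;>
        first
          | omega
          | (intro hc; exact one_add_I_ne (by linear_combination hc))
          | (intro hc; exact one_sub_I_ne (by linear_combination hc))
          | (intro hc; exact neg_one_add_I_ne (by linear_combination hc))
          | (constructor
             · intro hc; exact absurd (by ring) hc
             · intro hcond; exact absurd hcond (by omega))
          | (constructor
             · intro _; omega
             · intro _ hc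
               first
                 | exact one_add_I_ne (by linear_combination hc)
                 | exact one_sub_I_ne (by linear_combination hc)
                 | exact neg_one_add_I_ne (by linear_combination hc))
    · replace hm : A v = MM := hm
      rcases fin2_eq (x v) with h0 | h1 <;>
        [rw [hsum, hMMyes hm, hm, MM_eq, h0]; rw [hsum, hMMyes hm, hm, MM_eq, h1]] <;>
        norm_num [hL, hLmod] <;>
        first
          | omega
          | (intro hc; exact one_add_I_ne (by linear_combination hc))
          | (intro hc; exact one_sub_I_ne (by linear_combination hc))
          | (intro hc; exact neg_one_add_I_ne (by linear_combination hc))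
          | (constructor
             · intro hc; exact absurd (by ring) hc
             · intro hcond; exact absurd hcond (by omega))
          | (constructor
             · intro _; omega
             · intro _ hc
               first
                 | exact one_add_I_ne (by linear_combination hc)
                 | exact one_sub_I_ne (by linear_combination hc)
                 | exact neg_one_add_I_ne (by linear_combination hc))

end RGSLCAux
namespace RGSLCAux

open Finset

variable {n : ℕ}

lemma sq2C_ne : ((1 / Real.sqrt 2 : ℝ) : ℂ) ≠ 0 := by
  rw [Complex.ofReal_ne_zero]
  positivity

lemma state_ne_zero_iff (G : SimpleGraph (Fin n)) (A : Fin n → Matrix (Fin 2) (Fin 2) ℂ)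
    (hA : IsRGSLC G A) (x : Fin n → Fin 2) :
    rgslcState G A x ≠ 0 ↔ ∀ v, hasRedNode (A v) → gred G A v x ≠ 0 := by
  rw [state_formula G A hA x]
  constructor
  · intro h v hv
    intro hz
    apply h
    have hzero : (∏ v ∈ univ.filter (fun v => hasRedNode (A v)), gred G A v x) = 0 :=
      Finset.prod_eq_zero (Finset.mem_filter.mpr ⟨Finset.mem_univ v, hv⟩) hz
    rw [hzero]
    ring
  · intro h
    apply mul_ne_zero (pow_ne_zero _ sq2C_ne)
    apply mul_ne_zero (Dfun_ne_zero G x)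
    apply mul_ne_zero
    · rw [Finset.prod_ne_zero_iff]
      intro v hv
      obtain ⟨θ, hθ⟩ := nonred_Zrot (hA.1 v) (Finset.mem_filter.mp hv).2
      rw [hθ]
      exact Zrot_diag_ne θ _
    · rw [Finset.prod_ne_zero_iff]
      intro v hv
      exact h v (Finset.mem_filter.mp hv).2

open Fin.NatCast in
/-- The canonical support point extending a non-red pattern `z`. -/
def extd (G : SimpleGraph (Fin n)) (A : Fin n → Matrix (Fin 2) (Fin 2) ℂ)
    (z : Fin n → Fin 2) : Fin n → Fin 2 :=
  fun w => if hasRedNode (A w) then ((Lp G w z + sigN (A w) : ℕ) : Fin 2) else z w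

lemma extd_nonred (G : SimpleGraph (Fin n)) (A : Fin n → Matrix (Fin 2) (Fin 2) ℂ)
    (z : Fin n → Fin 2) (w : Fin n) (h : ¬ hasRedNode (A w)) : extd G A z w = z w := if_neg h

open Fin.NatCast in
lemma extd_red_val (G : SimpleGraph (Fin n)) (A : Fin n → Matrix (Fin 2) (Fin 2) ℂ)
    (z : Fin n → Fin 2) (w : Fin n) (h : hasRedNode (A w)) :
    ((extd G A z w) : ℕ) = (Lp G w z + sigN (A w)) % 2 := by
  unfold extd
  rw [if_pos h, Fin.val_natCast]

lemma Lp_extd (G : SimpleGraph (Fin n)) (A : Fin n → Matrix (Fin 2) (Fin 2) ℂ)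
    (hA : IsRGSLC G A) (v : Fin n) (hv : hasRedNode (A v)) (z : Fin n → Fin 2) :
    Lp G v (extd G A z) = Lp G v z := by
  apply Lp_congr
  intro w hw
  by_cases hred : hasRedNode (A w)
  · exact absurd ⟨hv, hred⟩ (hA.2 v w hw)
  · exact extd_nonred G A z w hred

lemma extd_support (G : SimpleGraph (Fin n)) (A : Fin n → Matrix (Fin 2) (Fin 2) ℂ)
    (hA : IsRGSLC G A) (z : Fin n → Fin 2) :
    rgslcState G A (extd G A z) ≠ 0 := by
  rw [state_ne_zero_iff G A hA]
  intro v hv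
  rw [gred_red_iff G A v _ hv, Lp_extd G A hA v hv z, extd_red_val G A z v hv]
  omega

lemma Dfun_eq_one (G : SimpleGraph (Fin n)) (x : Fin n → Fin 2)
    (h : ∀ a b, G.Adj a b → x a = 0 ∨ x b = 0) : Dfun G x = 1 := by
  unfold Dfun
  apply Finset.prod_eq_one
  intro e he
  rw [czPhase_eq_ite he]
  induction e using Sym2.ind with
  | _ a b =>
    rw [if_neg]
    intro hall
    have hadj : G.Adj a b := SimpleGraph.mem_edgeFinset.mp he
    rcases h a b hadj with h0 | h0
    · rw [hall a (Sym2.mem_mk_left a b)] at h0; exact absurd h0 (by norm_num)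
    · rw [hall b (Sym2.mem_mk_right a b)] at h0; exact absurd h0 (by norm_num)

end RGSLCAux
open Finset RGSLCAux in
/-- The two members of a simplified pair of rGS-LC data represent the same quantum state
(up to a unit scalar) if and only if they are identical. -/
theorem rGSLC_simplified_pair_eq_iff_identical {n : ℕ} (G₁ G₂ : SimpleGraph (Fin n))
    (A B : Fin n → Matrix (Fin 2) (Fin 2) ℂ) (hA : IsRGSLC G₁ A) (hB : IsRGSLC G₂ B)
    (hsimp : SimplifiedPair G₁ A G₂ B) :
    (∃ c : ℂ, ‖c‖ = 1 ∧ rgslcState G₁ A = c • rgslcState G₂ B) ↔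
      (G₁ = G₂ ∧ ∀ v, A v = B v) := by
  constructor
  · rintro ⟨c, hc, heq⟩
    have hc0 : c ≠ 0 := by
      intro h
      rw [h] at hc
      simp at hc
    have heqx : ∀ x, rgslcState G₁ A x = c * rgslcState G₂ B x := by
      intro x
      have := congrFun heq x
      simpa using this
    have hne_iff : ∀ x, rgslcState G₁ A x ≠ 0 ↔ rgslcState G₂ B x ≠ 0 := by
      intro x
      rw [heqx x]
      constructor
      · intro h hz
        exact h (by rw [hz, mul_zero])
      · exact fun h => mul_ne_zero hc0 h
    -- Step A : red nodes at the same vertices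
    have hred : ∀ v, hasRedNode (A v) ↔ hasRedNode (B v) := by
      intro p
      constructor
      · intro hAp
        by_contra hBp
        set z2 : Fin n → Fin 2 := fun w => if w = p then 1 else 0 with hz2
        set x1 := extd G₂ B (fun _ => 0) with hx1
        set x2 := extd G₂ B z2 with hx2
        have h1 : rgslcState G₁ A x1 ≠ 0 := (hne_iff x1).mpr (extd_support G₂ B hB _)
        have h2 : rgslcState G₁ A x2 ≠ 0 := (hne_iff x2).mpr (extd_support G₂ B hB _)
        have g1 := (state_ne_zero_iff G₁ A hA x1).mp h1 p hAp
        have g2 := (state_ne_zero_iff G₁ A hA x2).mp h2 p hAp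
        rw [gred_red_iff G₁ A p x1 hAp] at g1
        rw [gred_red_iff G₁ A p x2 hAp] at g2
        have hx1p : x1 p = 0 := extd_nonred _ _ _ p hBp
        have hx2p : x2 p = 1 := by
          rw [hx2, extd_nonred _ _ _ p hBp, hz2]
          simp
        rw [hx1p] at g1
        rw [hx2p] at g2
        simp only [Fin.val_zero, Fin.val_one] at g1 g2
        have hLne : Lp G₁ p x1 ≠ Lp G₁ p x2 := by
          intro h
          rw [h] at g1
          omega
        have hw : ∃ w, G₁.Adj p w ∧ x1 w ≠ x2 w := by
          by_contra hcon
          push_neg at hcon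
          exact hLne (Lp_congr G₁ p (fun w hw => hcon w hw))
        obtain ⟨w, hadj, hneq⟩ := hw
        have hwp : w ≠ p := fun h => (G₁.irrefl (h ▸ hadj))
        have hBw : hasRedNode (B w) := by
          by_contra hBw
          apply hneq
          rw [hx1, hx2, extd_nonred _ _ _ w hBw, extd_nonred _ _ _ w hBw, hz2]
          simp [hwp]
        have hAw : ¬ hasRedNode (A w) := fun hAw => hA.2 p w hadj ⟨hAp, hAw⟩
        exact hsimp ⟨p, w, ⟨hAp, hBp⟩, ⟨hBw, hAw⟩, Or.inl hadj⟩
      · intro hBp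
        by_contra hAp
        set z2 : Fin n → Fin 2 := fun w => if w = p then 1 else 0 with hz2
        set x1 := extd G₁ A (fun _ => 0) with hx1
        set x2 := extd G₁ A z2 with hx2
        have h1 : rgslcState G₂ B x1 ≠ 0 := (hne_iff x1).mp (extd_support G₁ A hA _)
        have h2 : rgslcState G₂ B x2 ≠ 0 := (hne_iff x2).mp (extd_support G₁ A hA _)
        have g1 := (state_ne_zero_iff G₂ B hB x1).mp h1 p hBp
        have g2 := (state_ne_zero_iff G₂ B hB x2).mp h2 p hBp
        rw [gred_red_iff G₂ B p x1 hBp] at g1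
        rw [gred_red_iff G₂ B p x2 hBp] at g2
        have hx1p : x1 p = 0 := extd_nonred _ _ _ p hAp
        have hx2p : x2 p = 1 := by
          rw [hx2, extd_nonred _ _ _ p hAp, hz2]
          simp
        rw [hx1p] at g1
        rw [hx2p] at g2
        simp only [Fin.val_zero, Fin.val_one] at g1 g2
        have hLne : Lp G₂ p x1 ≠ Lp G₂ p x2 := by
          intro h
          rw [h] at g1
          omega
        have hw : ∃ w, G₂.Adj p w ∧ x1 w ≠ x2 w := by
          by_contra hcon
          push_neg at hcon
          exact hLne (Lp_congr G₂ p (fun w hw => hcon w hw))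
        obtain ⟨w, hadj, hneq⟩ := hw
        have hwp : w ≠ p := fun h => (G₂.irrefl (h ▸ hadj))
        have hAw : hasRedNode (A w) := by
          by_contra hAw
          apply hneq
          rw [hx1, hx2, extd_nonred _ _ _ w hAw, extd_nonred _ _ _ w hAw, hz2]
          simp [hwp]
        have hBw : ¬ hasRedNode (B w) := fun hBw => hB.2 p w hadj ⟨hBp, hBw⟩
        exact hsimp ⟨w, p, ⟨hAw, hBw⟩, ⟨hBp, hAp⟩, Or.inr hadj.symm⟩
    -- Step B : red vertex data agree
    have sigN_le : ∀ M : Matrix (Fin 2) (Fin 2) ℂ, sigN M ≤ 1 := by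
      intro M
      unfold sigN
      split <;> norm_num
    have hpt : ∀ (z : Fin n → Fin 2) (v : Fin n), hasRedNode (A v) →
        (Lp G₁ v z + ((extd G₁ A z v) : ℕ) + sigN (A v)) % 2 = 0 ∧
        (Lp G₂ v z + ((extd G₁ A z v) : ℕ) + sigN (B v)) % 2 = 0 := by
      intro z v hv
      have hBv : hasRedNode (B v) := (hred v).mp hv
      have h2 : rgslcState G₂ B (extd G₁ A z) ≠ 0 := (hne_iff _).mp (extd_support G₁ A hA z)
      have g2 := (state_ne_zero_iff G₂ B hB _).mp h2 v hBv
      rw [gred_red_iff G₂ B v _ hBv] at g2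
      have hLp2 : Lp G₂ v (extd G₁ A z) = Lp G₂ v z := by
        apply Lp_congr
        intro w hw
        by_cases hrw : hasRedNode (A w)
        · exact absurd ⟨hBv, (hred w).mp hrw⟩ (hB.2 v w hw)
        · exact extd_nonred _ _ _ w hrw
      refine ⟨?_, ?_⟩
      · rw [extd_red_val G₁ A z v hv]
        omega
      · rw [hLp2] at g2
        exact g2
    have hsigeq : ∀ v, hasRedNode (A v) → sigN (A v) = sigN (B v) := by
      intro v hv
      obtain ⟨e1, e2⟩ := hpt (fun _ => 0) v hv
      rw [Lp_zero G₁ v] at e1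
      rw [Lp_zero G₂ v] at e2
      have h1 := sigN_le (A v)
      have h2 := sigN_le (B v)
      omega
    have hABred : ∀ v, hasRedNode (A v) → A v = B v := by
      intro v hv
      have hBv : hasRedNode (B v) := (hred v).mp hv
      have hs := hsigeq v hv
      rcases hv with hp | hm <;> rcases hBv with hp' | hm'
      · replace hp : A v = MP := hp
        replace hp' : B v = MP := hp'
        rw [hp, hp']
      · exfalso
        replace hp : A v = MP := hp
        replace hm' : B v = MM := hm'
        have hsA : sigN (A v) = 0 := by
          unfold sigN
          rw [if_neg (by rw [hp]; exact MP_ne_MM)]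
        have hsB : sigN (B v) = 1 := by
          unfold sigN
          rw [if_pos hm']
        omega
      · exfalso
        replace hm : A v = MM := hm
        replace hp' : B v = MP := hp'
        have hsA : sigN (A v) = 1 := by
          unfold sigN
          rw [if_pos hm]
        have hsB : sigN (B v) = 0 := by
          unfold sigN
          rw [if_neg (by rw [hp']; exact MP_ne_MM)]
        omega
      · replace hm : A v = MM := hm
        replace hm' : B v = MM := hm'
        rw [hm, hm']
    have hadjred : ∀ v, hasRedNode (A v) → ∀ j, (G₁.Adj v j ↔ G₂.Adj v j) := by
      intro v hv j
      by_cases hrj : hasRedNode (A j)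
      · constructor
        · intro h
          exact (hA.2 v j h ⟨hv, hrj⟩).elim
        · intro h
          exact (hB.2 v j h ⟨(hred v).mp hv, (hred j).mp hrj⟩).elim
      · obtain ⟨e1, e2⟩ := hpt (fun w => if w = j then 1 else 0) v hv
        rw [Lp_delta G₁ v j] at e1
        rw [Lp_delta G₂ v j] at e2
        have hs := hsigeq v hv
        by_cases h1 : G₁.Adj v j <;> by_cases h2 : G₂.Adj v j
        · exact iff_of_true h1 h2
        · exfalso
          rw [if_pos h1] at e1
          rw [if_neg h2] at e2
          omega
        · exfalso
          rw [if_neg h1] at e1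
          rw [if_pos h2] at e2
          omega
        · exact iff_of_false h1 h2
    have hNF : ∀ v, hasRedNode (A v) → G₁.neighborFinset v = G₂.neighborFinset v := by
      intro v hv
      ext w
      simp only [SimpleGraph.mem_neighborFinset]
      exact hadjred v hv w
    -- Step C : compare non-red data via the amplitude formula
    have hfilterR : univ.filter (fun v => hasRedNode (B v)) = univ.filter (fun v => hasRedNode (A v)) := by
      ext v
      simp [hred v]
    have hfilterN : univ.filter (fun v => ¬ hasRedNode (B v)) = univ.filter (fun v => ¬ hasRedNode (A v)) := by
      ext v
      simp [hred v]
    have hgred : ∀ v, hasRedNode (A v) → ∀ x, gred G₂ B v x = gred G₁ A v x := by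
      intro v hv x
      have hLpeq : Lp G₂ v x = Lp G₁ v x := by
        unfold Lp
        rw [hNF v hv]
      unfold gred
      rw [hABred v hv, hLpeq]
    have hPRne : ∀ z, (∏ v ∈ univ.filter (fun v => hasRedNode (A v)),
        gred G₁ A v (extd G₁ A z)) ≠ 0 := by
      intro z
      rw [Finset.prod_ne_zero_iff]
      intro v hv
      exact (state_ne_zero_iff G₁ A hA _).mp (extd_support G₁ A hA z) v (Finset.mem_filter.mp hv).2
    have key : ∀ z, Dfun G₁ (extd G₁ A z) *
        (∏ v ∈ univ.filter (fun v => ¬ hasRedNode (A v)), A v (extd G₁ A z v) (extd G₁ A z v))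
        = c * (Dfun G₂ (extd G₁ A z) *
          ∏ v ∈ univ.filter (fun v => ¬ hasRedNode (A v)), B v (extd G₁ A z v) (extd G₁ A z v)) := by
      intro z
      have heq2 := heqx (extd G₁ A z)
      rw [state_formula G₁ A hA, state_formula G₂ B hB, hfilterR, hfilterN] at heq2
      rw [show (∏ v ∈ univ.filter (fun v => hasRedNode (A v)), gred G₂ B v (extd G₁ A z))
          = ∏ v ∈ univ.filter (fun v => hasRedNode (A v)), gred G₁ A v (extd G₁ A z) from
        Finset.prod_congr rfl (fun v hv => hgred v (Finset.mem_filter.mp hv).2 _)] at heq2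
      have h' : (Dfun G₁ (extd G₁ A z) *
          (∏ v ∈ univ.filter (fun v => ¬ hasRedNode (A v)), A v (extd G₁ A z v) (extd G₁ A z v))) *
          (((1 / Real.sqrt 2 : ℝ) : ℂ) ^ n *
            ∏ v ∈ univ.filter (fun v => hasRedNode (A v)), gred G₁ A v (extd G₁ A z))
          = (c * (Dfun G₂ (extd G₁ A z) *
            ∏ v ∈ univ.filter (fun v => ¬ hasRedNode (A v)), B v (extd G₁ A z v) (extd G₁ A z v))) *
          (((1 / Real.sqrt 2 : ℝ) : ℂ) ^ n *
            ∏ v ∈ univ.filter (fun v => hasRedNode (A v)), gred G₁ A v (extd G₁ A z)) := by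
        linear_combination heq2
      exact mul_right_cancel₀ (mul_ne_zero (pow_ne_zero _ sq2C_ne) (hPRne z)) h'
    -- evaluate at the all-zero pattern to get c = 1
    have hnonredB : ∀ v, ¬ hasRedNode (A v) → ¬ hasRedNode (B v) := by
      intro v hv h
      exact hv ((hred v).mpr h)
    have hc1 : c = 1 := by
      have hk := key (fun _ => 0)
      have hD1 : Dfun G₁ (extd G₁ A (fun _ => 0)) = 1 := by
        apply Dfun_eq_one
        intro a b hab
        by_cases hra : hasRedNode (A a)
        · right
          have hrb : ¬ hasRedNode (A b) := fun h => hA.2 a b hab ⟨hra, h⟩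
          rw [extd_nonred _ _ _ b hrb]
        · left
          rw [extd_nonred _ _ _ a hra]
      have hD2 : Dfun G₂ (extd G₁ A (fun _ => 0)) = 1 := by
        apply Dfun_eq_one
        intro a b hab
        by_cases hra : hasRedNode (A a)
        · right
          have hrb : ¬ hasRedNode (A b) := fun h =>
            hB.2 a b hab ⟨(hred a).mp hra, (hred b).mp h⟩
          rw [extd_nonred _ _ _ b hrb]
        · left
          rw [extd_nonred _ _ _ a hra]
      have hNR1 : (∏ v ∈ univ.filter (fun v => ¬ hasRedNode (A v)),
          A v (extd G₁ A (fun _ => 0) v) (extd G₁ A (fun _ => 0) v)) = 1 := by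
        apply Finset.prod_eq_one
        intro v hv
        obtain ⟨θ, hθ⟩ := nonred_Zrot (hA.1 v) (Finset.mem_filter.mp hv).2
        rw [extd_nonred _ _ _ v (Finset.mem_filter.mp hv).2, hθ, Zrot_00]
      have hNR2 : (∏ v ∈ univ.filter (fun v => ¬ hasRedNode (A v)),
          B v (extd G₁ A (fun _ => 0) v) (extd G₁ A (fun _ => 0) v)) = 1 := by
        apply Finset.prod_eq_one
        intro v hv
        obtain ⟨θ, hθ⟩ := nonred_Zrot (hB.1 v) (hnonredB v (Finset.mem_filter.mp hv).2)
        rw [extd_nonred _ _ _ v (Finset.mem_filter.mp hv).2, hθ, Zrot_00]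
      rw [hD1, hD2, hNR1, hNR2] at hk
      linear_combination -hk
    rw [hc1] at key
    simp only [one_mul] at key
    -- non-red vertex operators agree
    have hABnon : ∀ j, ¬ hasRedNode (A j) → A j = B j := by
      intro j hj
      set zj : Fin n → Fin 2 := fun w => if w = j then 1 else 0 with hzj
      set xj := extd G₁ A zj with hxj
      have hxjj : xj j = 1 := by
        rw [hxj, extd_nonred _ _ _ j hj]
        simp [hzj]
      have hD12 : Dfun G₁ xj = Dfun G₂ xj := by
        rw [Dfun_eq_card, Dfun_eq_card]
        congr 2
        ext e
        simp only [Finset.mem_filter, SimpleGraph.mem_edgeFinset]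
        induction e using Sym2.ind with
        | _ a b =>
          have hkey : (∀ w ∈ s(a,b), xj w = 1) → a ≠ b → (G₁.Adj a b ↔ G₂.Adj a b) := by
            intro hall hne
            by_cases hra : hasRedNode (A a)
            · exact hadjred a hra b
            · by_cases hrb : hasRedNode (A b)
              · constructor
                · intro h
                  exact ((hadjred b hrb a).mp h.symm).symm
                · intro h
                  exact ((hadjred b hrb a).mpr h.symm).symm
              · exfalso
                have hxa : xj a = 1 := hall a (Sym2.mem_mk_left a b)
                have hxb : xj b = 1 := hall b (Sym2.mem_mk_right a b)
                rw [hxj, extd_nonred _ _ _ a hra] at hxa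
                rw [hxj, extd_nonred _ _ _ b hrb] at hxb
                simp only [hzj] at hxa hxb
                have ha : a = j := by
                  by_contra hcon
                  rw [if_neg hcon] at hxa
                  exact absurd hxa (by norm_num)
                have hb : b = j := by
                  by_contra hcon
                  rw [if_neg hcon] at hxb
                  exact absurd hxb (by norm_num)
                exact hne (ha.trans hb.symm)
          constructor
          · rintro ⟨hadj, hall⟩
            exact ⟨(hkey hall hadj.ne).mp hadj, hall⟩
          · rintro ⟨hadj, hall⟩
            exact ⟨(hkey hall hadj.ne).mpr hadj, hall⟩
      have hk := key zj
      rw [hD12] at hk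
      have hNReq : (∏ v ∈ univ.filter (fun v => ¬ hasRedNode (A v)), A v (xj v) (xj v))
          = ∏ v ∈ univ.filter (fun v => ¬ hasRedNode (A v)), B v (xj v) (xj v) :=
        mul_left_cancel₀ (Dfun_ne_zero G₂ xj) hk
      have hprodA : (∏ v ∈ univ.filter (fun v => ¬ hasRedNode (A v)), A v (xj v) (xj v))
          = A j 1 1 := by
        rw [Finset.prod_eq_single_of_mem j (Finset.mem_filter.mpr ⟨Finset.mem_univ j, hj⟩)]
        · rw [hxjj]
        · intro v hv hvj
          have hvnon := (Finset.mem_filter.mp hv).2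
          obtain ⟨θ, hθ⟩ := nonred_Zrot (hA.1 v) hvnon
          rw [hxj, extd_nonred _ _ _ v hvnon]
          simp only [hzj, if_neg hvj]
          rw [hθ, Zrot_00]
      have hprodB : (∏ v ∈ univ.filter (fun v => ¬ hasRedNode (A v)), B v (xj v) (xj v))
          = B j 1 1 := by
        rw [Finset.prod_eq_single_of_mem j (Finset.mem_filter.mpr ⟨Finset.mem_univ j, hj⟩)]
        · rw [hxjj]
        · intro v hv hvj
          have hvnon := (Finset.mem_filter.mp hv).2
          obtain ⟨θ, hθ⟩ := nonred_Zrot (hB.1 v) (hnonredB v hvnon)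
          rw [hxj, extd_nonred _ _ _ v hvnon]
          simp only [hzj, if_neg hvj]
          rw [hθ, Zrot_00]
      have h11 : A j 1 1 = B j 1 1 := by
        rw [← hprodA, ← hprodB]
        exact hNReq
      obtain ⟨θ1, hθ1⟩ := nonred_Zrot (hA.1 j) hj
      obtain ⟨θ2, hθ2⟩ := nonred_Zrot (hB.1 j) (hnonredB j hj)
      rw [hθ1, hθ2] at h11 ⊢
      ext i k
      fin_cases i <;> fin_cases k
      · show Zrot θ1 0 0 = Zrot θ2 0 0
        rw [Zrot_00, Zrot_00]
      · show Zrot θ1 0 1 = Zrot θ2 0 1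
        rw [Zrot_01, Zrot_01]
      · show Zrot θ1 1 0 = Zrot θ2 1 0
        rw [Zrot_10, Zrot_10]
      · show Zrot θ1 1 1 = Zrot θ2 1 1
        exact h11
    -- adjacency between non-red vertices agrees
    have hadjnon : ∀ j l, ¬ hasRedNode (A j) → ¬ hasRedNode (A l) → j ≠ l →
        (G₁.Adj j l ↔ G₂.Adj j l) := by
      intro j l hj hl hjl
      set zz : Fin n → Fin 2 := fun w => if w = j then 1 else if w = l then 1 else 0 with hzz
      set xx := extd G₁ A zz with hxx
      have hxxj : xx j = 1 := by
        rw [hxx, extd_nonred _ _ _ j hj]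
        simp [hzz]
      have hxxl : xx l = 1 := by
        rw [hxx, extd_nonred _ _ _ l hl]
        simp [hzz, hjl.symm]
      -- the non-red entry products agree and are nonzero
      have hNReq : (∏ v ∈ univ.filter (fun v => ¬ hasRedNode (A v)), A v (xx v) (xx v))
          = ∏ v ∈ univ.filter (fun v => ¬ hasRedNode (A v)), B v (xx v) (xx v) :=
        Finset.prod_congr rfl (fun v hv => by rw [hABnon v (Finset.mem_filter.mp hv).2])
      have hNRne : (∏ v ∈ univ.filter (fun v => ¬ hasRedNode (A v)), A v (xx v) (xx v)) ≠ 0 := by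
        rw [Finset.prod_ne_zero_iff]
        intro v hv
        obtain ⟨θ, hθ⟩ := nonred_Zrot (hA.1 v) (Finset.mem_filter.mp hv).2
        rw [hθ]
        exact Zrot_diag_ne θ _
      have hk := key zz
      rw [← hNReq] at hk
      have hDD : Dfun G₁ xx = Dfun G₂ xx := mul_right_cancel₀ hNRne hk
      rw [Dfun_eq_card, Dfun_eq_card] at hDD
      set F₁ := G₁.edgeFinset.filter (fun e => ∀ w ∈ e, xx w = 1) with hF1
      set F₂ := G₂.edgeFinset.filter (fun e => ∀ w ∈ e, xx w = 1) with hF2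
      have herase : F₁.erase s(j,l) = F₂.erase s(j,l) := by
        ext e
        simp only [Finset.mem_erase, hF1, hF2, Finset.mem_filter, SimpleGraph.mem_edgeFinset]
        induction e using Sym2.ind with
        | _ a b =>
          have hkey : (∀ w ∈ s(a,b), xx w = 1) → G₁.Adj a b ∨ G₂.Adj a b →
              ¬ s(a,b) = s(j,l) → (G₁.Adj a b ↔ G₂.Adj a b) := by
            intro hall hadj hne
            by_cases hra : hasRedNode (A a)
            · exact hadjred a hra b
            · by_cases hrb : hasRedNode (A b)
              · constructor
                · intro h
                  exact ((hadjred b hrb a).mp h.symm).symm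
                · intro h
                  exact ((hadjred b hrb a).mpr h.symm).symm
              · exfalso
                have hxa : xx a = 1 := hall a (Sym2.mem_mk_left a b)
                have hxb : xx b = 1 := hall b (Sym2.mem_mk_right a b)
                rw [hxx, extd_nonred _ _ _ a hra] at hxa
                rw [hxx, extd_nonred _ _ _ b hrb] at hxb
                simp only [hzz] at hxa hxb
                have hab : a ≠ b := by
                  rcases hadj with h | h
                  · exact h.ne
                  · exact h.ne
                have ha : a = j ∨ a = l := by
                  by_contra hcon
                  push_neg at hcon
                  rw [if_neg hcon.1, if_neg hcon.2] at hxa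
                  exact absurd hxa (by norm_num)
                have hb : b = j ∨ b = l := by
                  by_contra hcon
                  push_neg at hcon
                  rw [if_neg hcon.1, if_neg hcon.2] at hxb
                  exact absurd hxb (by norm_num)
                rcases ha with rfl | rfl <;> rcases hb with rfl | rfl
                · exact hab rfl
                · exact hne rfl
                · exact hne (Sym2.eq_swap)
                · exact hab rfl
          constructor
          · rintro ⟨hne, hadj, hall⟩
            exact ⟨hne, (hkey hall (Or.inl hadj) hne).mp hadj, hall⟩
          · rintro ⟨hne, hadj, hall⟩
            exact ⟨hne, (hkey hall (Or.inr hadj) hne).mpr hadj, hall⟩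
      have hmem1 : s(j,l) ∈ F₁ ↔ G₁.Adj j l := by
        rw [hF1, Finset.mem_filter, SimpleGraph.mem_edgeFinset]
        constructor
        · exact fun h => h.1
        · intro h
          refine ⟨h, ?_⟩
          intro w hw
          rcases Sym2.mem_iff.mp hw with rfl | rfl
          · exact hxxj
          · exact hxxl
      have hmem2 : s(j,l) ∈ F₂ ↔ G₂.Adj j l := by
        rw [hF2, Finset.mem_filter, SimpleGraph.mem_edgeFinset]
        constructor
        · exact fun h => h.1
        · intro h
          refine ⟨h, ?_⟩
          intro w hw
          rcases Sym2.mem_iff.mp hw with rfl | rfl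
          · exact hxxj
          · exact hxxl
      by_cases h1 : G₁.Adj j l <;> by_cases h2 : G₂.Adj j l
      · exact iff_of_true h1 h2
      · exfalso
        have hc1' : (F₁.erase s(j,l)).card = F₁.card - 1 :=
          Finset.card_erase_of_mem (hmem1.mpr h1)
        have hpos : 1 ≤ F₁.card := Finset.card_pos.mpr ⟨_, hmem1.mpr h1⟩
        have hc2' : F₂.erase s(j,l) = F₂ :=
          Finset.erase_eq_of_notMem (fun hm => h2 (hmem2.mp hm))
        have hcard : F₁.card = F₂.card + 1 := by
          have := congrArg Finset.card herase
          rw [hc1', hc2'] at this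
          omega
        rw [hcard, pow_succ] at hDD
        have hne0 : ((-1 : ℂ)) ^ F₂.card ≠ 0 := pow_ne_zero _ (by norm_num)
        field_simp at hDD
        exact hne0 (by linear_combination (-(-1 : ℂ) ^ F₂.card / 2) * hDD)
      · exfalso
        have hc1' : (F₂.erase s(j,l)).card = F₂.card - 1 :=
          Finset.card_erase_of_mem (hmem2.mpr h2)
        have hpos : 1 ≤ F₂.card := Finset.card_pos.mpr ⟨_, hmem2.mpr h2⟩
        have hc2' : F₁.erase s(j,l) = F₁ :=
          Finset.erase_eq_of_notMem (fun hm => h1 (hmem1.mp hm))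
        have hcard : F₂.card = F₁.card + 1 := by
          have := congrArg Finset.card herase
          rw [hc1', hc2'] at this
          omega
        rw [hcard, pow_succ] at hDD
        have hne0 : ((-1 : ℂ)) ^ F₁.card ≠ 0 := pow_ne_zero _ (by norm_num)
        field_simp at hDD
        exact hne0 (by linear_combination ((-1 : ℂ) ^ F₁.card / 2) * hDD)
      · exact iff_of_false h1 h2
    -- assemble
    refine ⟨?_, ?_⟩
    · ext v w
      by_cases hrv : hasRedNode (A v)
      · exact hadjred v hrv w
      · by_cases hrw : hasRedNode (A w)
        · constructor
          · intro h
            exact ((hadjred w hrw v).mp h.symm).symm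
          · intro h
            exact ((hadjred w hrw v).mpr h.symm).symm
        · by_cases hvw : v = w
          · subst hvw
            exact iff_of_false (G₁.irrefl) (G₂.irrefl)
          · exact hadjnon v w hrv hrw hvw
    · intro v
      by_cases hrv : hasRedNode (A v)
      · exact hABred v hrv
      · exact hABnon v hrv




  · rintro ⟨rfl, hAB⟩
    obtain rfl : A = B := funext hAB
    exact ⟨1, by norm_num, (one_smul _ _).symm⟩
end
end

section
/- A graph state is a product of single-qubit states if and only if its graph has no edges: for a finite simple graph G on vertex set Fin n, there exist single-qubit vectors ψ_1, …, ψ_n ∈ ℂ² with |G⟩ = ψ_1 ⊗ ⋯ ⊗ ψ_n if and only if the edge set of G is empty. -/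
open scoped Matrix BigOperators
open scoped Classical

noncomputable section

/-- A graph state is a product of single-qubit states if and only if its graph has no
edges. -/
theorem graphState_product_iff_no_edges {n : ℕ} (G : SimpleGraph (Fin n)) :
    (∃ ψ : Fin n → (Fin 2 → ℂ), graphState G = fun x => ∏ j, ψ j (x j)) ↔
      G.edgeSet = ∅ := by
  constructor
  · rintro ⟨ψ, hψ⟩
    by_contra hE
    obtain ⟨e, he⟩ := Set.nonempty_iff_ne_empty.mpr hE
    induction e using Sym2.ind with
    | _ u v =>
      have huv : G.Adj u v := he
      have hne : u ≠ v := huv.ne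
      set c0 : ℂ := ((1 / Real.sqrt 2 : ℝ) : ℂ) ^ n with hc0
      have hc0ne : c0 ≠ 0 := by
        apply pow_ne_zero
        simp only [ne_eq, Complex.ofReal_eq_zero]
        positivity
      clear_value c0
      set X : Fin 2 → Fin 2 → (Fin n → Fin 2) :=
        fun a b j => if j = u then a else if j = v then b else 0 with hX
      have hXu : ∀ a b, X a b u = a := by intro a b; simp [hX]
      have hXv : ∀ a b, X a b v = b := by intro a b; simp [hX, Ne.symm hne]
      have key : ∀ a b : Fin 2,
          graphState G (X a b) = (-1 : ℂ) ^ ((a : ℕ) * (b : ℕ)) * c0 := by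
        intro a b
        have hdiag : graphState G (X a b) =
            (∏ e ∈ G.edgeFinset, czPhase e (X a b)) * c0 := by
          simp [graphState, CZofEdges, Matrix.mulVec_diagonal, plusState, hc0]
        rw [hdiag]
        congr 1
        have hmem : s(u, v) ∈ G.edgeFinset := by
          rw [SimpleGraph.mem_edgeFinset]; exact huv
        rw [Finset.prod_eq_single_of_mem _ hmem]
        · simp [czPhase, hXu, hXv]
        · intro e heE hene
          induction e using Sym2.ind with
          | _ p q =>
            have hpq : G.Adj p q := SimpleGraph.mem_edgeFinset.mp heE
            have hzero : X a b p = 0 ∨ X a b q = 0 := by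
              by_cases hpu : p = u
              · right
                have hqv : q ≠ v := by
                  intro h; exact hene (by rw [hpu, h])
                have hqu : q ≠ u := by rw [← hpu]; exact hpq.ne.symm
                simp [hX, hqu, hqv]
              · by_cases hpv : p = v
                · right
                  have hqu : q ≠ u := by
                    intro h
                    exact hene (by rw [hpv, h, Sym2.eq_swap])
                  have hqv : q ≠ v := by rw [← hpv]; exact hpq.ne.symm
                  simp [hX, hqu, hqv]
                · left; simp [hX, hpu, hpv]
            rcases hzero with h | h <;> simp [czPhase, h]
      have hF : ∀ a b, (∏ j, ψ j (X a b j)) = (-1 : ℂ) ^ ((a : ℕ) * (b : ℕ)) * c0 := by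
        intro a b
        rw [← key a b, hψ]
      have h3 : (∏ j, ψ j (X 0 0 j)) * (∏ j, ψ j (X 1 1 j)) =
          (∏ j, ψ j (X 0 1 j)) * (∏ j, ψ j (X 1 0 j)) := by
        rw [← Finset.prod_mul_distrib, ← Finset.prod_mul_distrib]
        apply Finset.prod_congr rfl
        intro j _
        by_cases hu : j = u <;> by_cases hv : j = v <;>
          simp [hX, hu, hv, Ne.symm hne, mul_comm]
      rw [hF 0 0, hF 1 1, hF 0 1, hF 1 0] at h3
      norm_num at h3
      have hcc : c0 * c0 = 0 := by linear_combination -h3 / 2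
      exact hc0ne (mul_self_eq_zero.mp hcc)
  · intro hE
    refine ⟨fun _ _ => ((1 / Real.sqrt 2 : ℝ) : ℂ), ?_⟩
    have hEF : G.edgeFinset = ∅ := by
      simp [SimpleGraph.edgeFinset, hE]
    funext x
    simp [graphState, CZofEdges, hEF, Matrix.mulVec_diagonal, plusState,
      Finset.prod_const, Finset.card_univ]
end
end
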